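/- arXiv:1211.4953 — 7 statements merged into one kernel-verified Lean document; each statement's English description precedes it below -/
import Mathlib

section
/- Let f, g : X → (-∞, +∞] be proper lower semicontinuous convex functions on a real Banach space X with dom f ∩ dom g ≠ ∅. Then for every x ∈ X and every ε ≥ 0, the ε-subdifferential of f + g at x equals the intersection over all η > 0 of the weak* closures of the unions, over ε₁, ε₂ ≥ 0 with ε₁ + ε₂ = ε + η, of ∂_{ε₁}f(x) + ∂_{ε₂}g(x). -/
/-!
For `⊇`: `∂_{ε₁} f x + ∂_{ε₂} g x ⊆ ∂_{ε₁+ε₂} (f + g) x` and ε-subdifferentials are weak* closed.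

For `⊆`: when `h x = a` is finite, `p ∈ ∂_ε h x` iff `(p, p x - a + ε)` lies in the epigraph of
the conjugate `h*`, so it suffices that `epi (f + g)*` lies in the weak* closure of
`epi f* + epi g*`. A point `(p, r)` outside it is separated by a closed hyperplane in `X* × ℝ`; the
continuous functionals there are evaluations at points of `X`, and a point of `dom f ∩ dom g`
lets us tilt the hyperplane to a non-vertical one. That yields `z` and `β < p z - r` with
`q₁ z - s₁ + q₂ z - s₂ < β` on `epi f* × epi g*`, hence `f z + g z = f** z + g** z ≤ β` by
Fenchel–Moreau (the same separation argument, in `X × ℝ`), contradicting `p z - r ≤ f z + g z`.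
-/

open Pointwise Topology Set

noncomputable section

variable {X : Type*} [NormedAddCommGroup X] [NormedSpace ℝ X]

/-- `f` is proper: never `-∞` and finite somewhere. -/
def EProper (f : X → EReal) : Prop := (∀ x, f x ≠ ⊥) ∧ ∃ x, f x ≠ ⊤

/-- effective domain of `f`. -/
def edom (f : X → EReal) : Set X := {x | f x < ⊤}

/-- convexity for extended-real-valued functions. -/
def EConvex (f : X → EReal) : Prop :=
  ∀ x y : X, ∀ t : ℝ, 0 ≤ t → t ≤ 1 →
    f (t • x + (1 - t) • y) ≤ (t : EReal) * f x + ((1 - t : ℝ) : EReal) * f y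

/-- the ε-subdifferential of `f` at `x`, a subset of the weak* dual. -/
def epsSubdiff (f : X → EReal) (ε : ℝ) (x : X) : Set (WeakDual ℝ X) :=
  {p | f x ≠ ⊤ ∧ f x ≠ ⊥ ∧ ∀ y : X, (p (y - x) : EReal) + f x ≤ f y + (ε : EReal)}

/-- the (exact) subdifferential of `f` at `x`. -/
def subdiff (f : X → EReal) (x : X) : Set (WeakDual ℝ X) := epsSubdiff f 0 x

/-- the Fenchel conjugate of `f`. -/
def fconj (f : X → EReal) (p : WeakDual ℝ X) : EReal := ⨆ x : X, (p x : EReal) - f x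

/-- the infimal convolution of finitely many functions on the dual. -/
def infConv {m : ℕ} (g : Fin m → WeakDual ℝ X → EReal) (p : WeakDual ℝ X) : EReal :=
  ⨅ (y : Fin m → WeakDual ℝ X) (_ : ∑ i, y i = p), ∑ i, g i (y i)

/-- exactness (attainment) of the infimal convolution at `p`. -/
def infConvExactAt {m : ℕ} (g : Fin m → WeakDual ℝ X → EReal) (p : WeakDual ℝ X) : Prop :=
  ∃ y : Fin m → WeakDual ℝ X, ∑ i, y i = p ∧ infConv g p = ∑ i, g i (y i)

/-- the epigraph of the Fenchel conjugate of `f`, in `X* × ℝ`. -/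
def epiConj (f : X → EReal) : Set ((WeakDual ℝ X) × ℝ) :=
  {q | fconj f q.1 ≤ (q.2 : EReal)}

instance WeakDual.instLocallyConvexSpace : LocallyConvexSpace ℝ (WeakDual ℝ X) :=
  WeakBilin.locallyConvexSpace

theorem WeakDual.exists_apply_eq_eval (φ : WeakDual ℝ X →L[ℝ] ℝ) :
    ∃ w : X, ∀ q : WeakDual ℝ X, φ q = q w := by
  obtain ⟨w, hw⟩ := LinearMap.dualEmbedding_surjective (topDualPairing ℝ X) φ
  exact ⟨w, fun q => by rw [← hw]; rfl⟩

section Separation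

variable {E : Type*}

def IsUpwardClosedSnd (A : Set (E × ℝ)) : Prop :=
  ∀ ⦃y : E⦄ ⦃s s' : ℝ⦄, (y, s) ∈ A → s ≤ s' → (y, s') ∈ A

theorem IsUpwardClosedSnd.add_right [Add E] {A B : Set (E × ℝ)} (hA : IsUpwardClosedSnd A) :
    IsUpwardClosedSnd (A + B) := by
  rintro y s s' ⟨⟨y₁, s₁⟩, h₁, ⟨y₂, s₂⟩, h₂, he⟩ hs
  obtain ⟨rfl, rfl⟩ := Prod.mk.inj he
  exact ⟨(y₁, s₁ + (s' - (s₁ + s₂))), hA h₁ (by linarith), (y₂, s₂), h₂,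
    Prod.ext rfl (by dsimp; ring)⟩

variable [AddCommGroup E] [Module ℝ E] [TopologicalSpace E]

theorem ContinuousLinearMap.apply_prod_eq (Φ : E × ℝ →L[ℝ] ℝ) (y : E) (s : ℝ) :
    Φ (y, s) = Φ.comp (ContinuousLinearMap.inl ℝ E ℝ) y + Φ (0, 1) * s := by
  have hys : (y, s) = (y, (0 : ℝ)) + s • ((0 : E), (1 : ℝ)) := by simp
  rw [hys, map_add, map_smul, smul_eq_mul, mul_comm]
  rfl

theorem exists_affine_sep_of_pos {A : Set (E × ℝ)} {z : E} {t : ℝ} {φ : E →L[ℝ] ℝ} {c u : ℝ}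
    (hc : 0 < c) (hz : φ z + c * t < u) (hA : ∀ p ∈ A, u < φ p.1 + c * p.2) :
    ∃ (ℓ : E →L[ℝ] ℝ) (β : ℝ), β < ℓ z - t ∧ ∀ p ∈ A, ℓ p.1 - p.2 < β := by
  have hℓ : ∀ y s, (-c⁻¹ • φ) y - s = -((φ y + c * s) / c) := fun y s => by
    simp only [FunLike.coe_smul, Pi.smul_apply, smul_eq_mul]
    field_simp
    ring
  refine ⟨-c⁻¹ • φ, -(u / c), ?_, fun p hp => ?_⟩
  · rw [hℓ, neg_lt_neg_iff]; exact div_lt_div_of_pos_right hz hc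
  · rw [hℓ, neg_lt_neg_iff]; exact div_lt_div_of_pos_right (hA p hp) hc

variable [IsTopologicalAddGroup E] [ContinuousSMul ℝ E] [LocallyConvexSpace ℝ E]

theorem exists_sep_of_notMem_closure {A : Set (E × ℝ)} (hA : Convex ℝ A)
    (hup : IsUpwardClosedSnd A) (hne : A.Nonempty) {z : E} {t : ℝ} (h : (z, t) ∉ closure A) :
    ∃ (φ : E →L[ℝ] ℝ) (c u : ℝ), 0 ≤ c ∧ φ z + c * t < u ∧ ∀ p ∈ A, u < φ p.1 + c * p.2 := by
  obtain ⟨Φ, u, hz, hA'⟩ := geometric_hahn_banach_point_closed hA.closure isClosed_closure h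
  set φ := Φ.comp (ContinuousLinearMap.inl ℝ E ℝ)
  have hsep : ∀ p ∈ A, u < φ p.1 + Φ (0, 1) * p.2 := fun p hp => by
    rw [← Φ.apply_prod_eq]; exact hA' p (subset_closure hp)
  refine ⟨φ, Φ (0, 1), u, ?_, by rw [← Φ.apply_prod_eq]; exact hz, hsep⟩
  by_contra! hc
  obtain ⟨⟨y, s⟩, hys⟩ := hne
  obtain ⟨n, hn⟩ := exists_nat_gt ((φ y + Φ (0, 1) * s - u) / -Φ (0, 1))
  have := hsep _ (hup hys (le_add_of_nonneg_right n.cast_nonneg))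
  rw [div_lt_iff₀ (neg_pos.2 hc)] at hn
  simp only at this
  nlinarith

theorem exists_affine_sep_of_mem {A : Set (E × ℝ)} (hA : Convex ℝ A) (hup : IsUpwardClosedSnd A)
    {z : E} {t t' : ℝ} (h : (z, t) ∉ closure A) (hz : (z, t') ∈ A) :
    ∃ (ℓ : E →L[ℝ] ℝ) (β : ℝ), β < ℓ z - t ∧ ∀ p ∈ A, ℓ p.1 - p.2 < β := by
  obtain ⟨φ, c, u, hc, hzt, hsep⟩ := exists_sep_of_notMem_closure hA hup ⟨_, hz⟩ h
  have htt' : t < t' := lt_of_not_ge fun h' => h (subset_closure (hup hz h'))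
  have hzt' := hsep _ hz
  exact exists_affine_sep_of_pos (by simp only at hzt'; nlinarith) hzt hsep

/-- Separation by a non-vertical hyperplane: tilting the separating functional by a small multiple
of the affine minorant `ℓ₀` makes its real coefficient positive. -/
theorem exists_affine_sep {A : Set (E × ℝ)} (hA : Convex ℝ A) (hup : IsUpwardClosedSnd A)
    (hne : A.Nonempty) {ℓ₀ : E →L[ℝ] ℝ} {β₀ : ℝ} (hmin : ∀ p ∈ A, ℓ₀ p.1 - p.2 ≤ β₀)
    {z : E} {t : ℝ} (h : (z, t) ∉ closure A) :
    ∃ (ℓ : E →L[ℝ] ℝ) (β : ℝ), β < ℓ z - t ∧ ∀ p ∈ A, ℓ p.1 - p.2 < β := by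
  obtain ⟨φ, c, u, hc, hzt, hsep⟩ := exists_sep_of_notMem_closure hA hup hne h
  obtain ⟨κ, hκ, hκlt⟩ := exists_pos_mul_lt (sub_pos.2 hzt) (β₀ + t - ℓ₀ z)
  refine exists_affine_sep_of_pos (φ := φ - κ • ℓ₀) (c := c + κ) (u := u - κ * β₀)
    (by linarith) ?_ fun p hp => ?_
  · simp only [sub_apply, FunLike.coe_smul, Pi.smul_apply, smul_eq_mul]
    linarith
  · have := hsep p hp
    have := mul_le_mul_of_nonneg_left (hmin p hp) hκ.le
    simp only [sub_apply, FunLike.coe_smul, Pi.smul_apply, smul_eq_mul]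
    linarith

end Separation

theorem EReal.exists_eq_coe {a : EReal} (h₁ : a ≠ ⊤) (h₂ : a ≠ ⊥) : ∃ r : ℝ, a = r :=
  ⟨a.toReal, (EReal.coe_toReal h₁ h₂).symm⟩

theorem EReal.coe_le_add_coe_iff {c ε : ℝ} {a : EReal} :
    (c : EReal) ≤ a + ε ↔ ((c - ε : ℝ) : EReal) ≤ a := by
  rw [EReal.coe_sub,
    EReal.sub_le_iff_le_add (.inl (EReal.coe_ne_bot ε)) (.inl (EReal.coe_ne_top ε))]

theorem EReal.add_le_coe_of_forall_coe_lt {a b : EReal} {β : ℝ}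
    (h : ∀ t₁ t₂ : ℝ, (t₁ : EReal) < a → (t₂ : EReal) < b → t₁ + t₂ ≤ β) : a + b ≤ β := by
  refine EReal.add_le_of_forall_lt fun a' ha' b' hb' => ?_
  induction a' using EReal.rec with
  | bot => simp
  | top => exact absurd ha' not_top_lt
  | coe t₁ =>
    induction b' using EReal.rec with
    | bot => simp
    | top => exact absurd hb' not_top_lt
    | coe t₂ => exact_mod_cast h t₁ t₂ ha' hb'

def realEpigraph {α : Type*} (F : α → EReal) : Set (α × ℝ) := {p | F p.1 ≤ p.2}

theorem isUpwardClosedSnd_realEpigraph {α : Type*} (F : α → EReal) :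
    IsUpwardClosedSnd (realEpigraph F) :=
  fun _ _ _ h hs => le_trans h (EReal.coe_le_coe_iff.2 hs)

theorem LowerSemicontinuous.isClosed_realEpigraph {α : Type*} [TopologicalSpace α] {F : α → EReal}
    (hF : LowerSemicontinuous F) : IsClosed (realEpigraph F) :=
  hF.isClosed_epigraph.preimage
    (continuous_fst.prodMk (continuous_coe_real_ereal.comp continuous_snd))

theorem EConvex.convex_realEpigraph {f : X → EReal} (hf : EConvex f) :
    Convex ℝ (realEpigraph f) := by
  rintro ⟨x₁, s₁⟩ h₁ ⟨x₂, s₂⟩ h₂ a b ha hb hab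
  obtain rfl : b = 1 - a := by linarith
  calc f (a • x₁ + (1 - a) • x₂) ≤ (a : EReal) * f x₁ + ((1 - a : ℝ) : EReal) * f x₂ :=
        hf x₁ x₂ a ha (by linarith)
    _ ≤ (a : EReal) * s₁ + ((1 - a : ℝ) : EReal) * s₂ :=
        add_le_add (mul_le_mul_of_nonneg_left h₁ (EReal.coe_nonneg.2 ha))
          (mul_le_mul_of_nonneg_left h₂ (EReal.coe_nonneg.2 hb))
    _ = ((a • (x₁, s₁) + (1 - a) • (x₂, s₂)).2 : ℝ) := by
        simp only [Prod.snd_add, Prod.smul_snd, smul_eq_mul, EReal.coe_add, EReal.coe_mul]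

theorem mem_epiConj_iff {f : X → EReal} {q : WeakDual ℝ X} {s : ℝ} :
    (q, s) ∈ epiConj f ↔ ∀ y, ((q y - s : ℝ) : EReal) ≤ f y := by
  change fconj f q ≤ s ↔ _
  refine iSup_le_iff.trans (forall_congr' fun y => ?_)
  rw [EReal.sub_le_iff_le_add (.inr (EReal.coe_ne_top s)) (.inr (EReal.coe_ne_bot s)), add_comm,
    EReal.coe_le_add_coe_iff]

theorem sub_le_of_mem_epiConj {f : X → EReal} {q : WeakDual ℝ X} {s : ℝ} (h : (q, s) ∈ epiConj f)
    {y : X} {r : ℝ} (hr : f y ≤ r) : q y - s ≤ r :=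
  EReal.coe_le_coe_iff.1 ((mem_epiConj_iff.1 h y).trans hr)

theorem mem_epiConj_of_forall_sub_lt {f : X → EReal} {ℓ : X →L[ℝ] ℝ} {β : ℝ}
    (h : ∀ p ∈ realEpigraph f, ℓ p.1 - p.2 < β) : (StrongDual.toWeakDual ℓ, β) ∈ epiConj f := by
  refine mem_epiConj_iff.2 fun y => ?_
  by_contra! hlt
  have := h (y, ℓ y - β) hlt.le
  simp at this

theorem convex_epiConj (f : X → EReal) : Convex ℝ (epiConj f) := by
  rintro ⟨q₁, s₁⟩ h₁ ⟨q₂, s₂⟩ h₂ a b ha hb hab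
  refine mem_epiConj_iff.2 fun y => ?_
  have hcombo : (a • q₁ + b • q₂) y - (a * s₁ + b * s₂) = a • (q₁ y - s₁) + b • (q₂ y - s₂) := by
    change a * q₁ y + b * q₂ y - _ = _
    simp only [smul_eq_mul]; ring
  simp only [Prod.smul_mk, smul_eq_mul, hcombo]
  exact (EReal.coe_le_coe_iff.2 (Convex.combo_le_max _ _ ha hb hab)).trans
    (max_le (mem_epiConj_iff.1 h₁ y) (mem_epiConj_iff.1 h₂ y))

theorem isClosed_epiConj (f : X → EReal) : IsClosed (epiConj f) := by
  have : epiConj f = ⋂ y, {q : WeakDual ℝ X × ℝ | ((q.1 y - q.2 : ℝ) : EReal) ≤ f y} := by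
    ext ⟨q, s⟩; simp [mem_epiConj_iff]
  rw [this]
  exact isClosed_iInter fun y => isClosed_le (continuous_coe_real_ereal.comp
    (((WeakDual.eval_continuous y).comp continuous_fst).sub continuous_snd)) continuous_const

theorem epiConj_nonempty {f : X → EReal} (hf : EProper f) (hfl : LowerSemicontinuous f)
    (hfc : EConvex f) : (epiConj f).Nonempty := by
  obtain ⟨x₀, hx₀⟩ := hf.2
  obtain ⟨v, hv⟩ := EReal.exists_eq_coe hx₀ (hf.1 x₀)
  have hout : (x₀, v - 1) ∉ closure (realEpigraph f) := by
    rw [hfl.isClosed_realEpigraph.closure_eq]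
    change ¬ f x₀ ≤ ((v - 1 : ℝ) : EReal)
    rw [hv, EReal.coe_le_coe_iff]
    linarith
  obtain ⟨ℓ, β, -, hℓ⟩ := exists_affine_sep_of_mem hfc.convex_realEpigraph
    (isUpwardClosedSnd_realEpigraph f) hout (t' := v) (by simp [realEpigraph, hv])
  exact ⟨_, mem_epiConj_of_forall_sub_lt hℓ⟩

/-- Fenchel–Moreau: a proper lower semicontinuous convex function is the supremum of the affine
functions `y ↦ q y - s` with `(q, s)` in the epigraph of its conjugate. -/
theorem exists_mem_epiConj_lt_sub {f : X → EReal} (hf : EProper f) (hfl : LowerSemicontinuous f)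
    (hfc : EConvex f) {z : X} {t : ℝ} (ht : (t : EReal) < f z) :
    ∃ (q : WeakDual ℝ X) (s : ℝ), (q, s) ∈ epiConj f ∧ t < q z - s := by
  obtain ⟨⟨q₀, s₀⟩, h₀⟩ := epiConj_nonempty hf hfl hfc
  obtain ⟨x₀, hx₀⟩ := hf.2
  obtain ⟨v, hv⟩ := EReal.exists_eq_coe hx₀ (hf.1 x₀)
  obtain ⟨ℓ, β, hβ, hℓ⟩ := exists_affine_sep hfc.convex_realEpigraph
    (isUpwardClosedSnd_realEpigraph f) ⟨(x₀, v), hv.le⟩ (ℓ₀ := q₀) (β₀ := s₀)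
    (fun p hp => sub_le_comm.1 (sub_le_of_mem_epiConj h₀ hp))
    (by rw [hfl.isClosed_realEpigraph.closure_eq]; exact ht.not_ge)
  refine ⟨_, β, mem_epiConj_of_forall_sub_lt hℓ, ?_⟩
  simp only [StrongDual.toWeakDual_apply]
  linarith

theorem add_subset_epiConj_add (f g : X → EReal) :
    epiConj f + epiConj g ⊆ epiConj (fun y => f y + g y) := by
  rintro _ ⟨⟨q₁, s₁⟩, h₁, ⟨q₂, s₂⟩, h₂, rfl⟩
  refine mem_epiConj_iff.2 fun y => ?_
  convert add_le_add (mem_epiConj_iff.1 h₁ y) (mem_epiConj_iff.1 h₂ y) using 1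
  rw [← EReal.coe_add]
  congr 1
  change q₁ y + q₂ y - (s₁ + s₂) = _
  ring

/-- The epigraph form of `(f + g)* = cl (f* □ g*)`. -/
theorem epiConj_add_subset_closure {f g : X → EReal} (hf : EProper f) (hg : EProper g)
    (hfl : LowerSemicontinuous f) (hgl : LowerSemicontinuous g) (hfc : EConvex f) (hgc : EConvex g)
    (hdom : (edom f ∩ edom g).Nonempty) :
    epiConj (fun y => f y + g y) ⊆ closure (epiConj f + epiConj g) := by
  rintro ⟨p, r⟩ hpr
  by_contra hout
  obtain ⟨x₀, hx₀f, hx₀g⟩ := hdom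
  obtain ⟨a, ha⟩ := EReal.exists_eq_coe hx₀f.ne (hf.1 x₀)
  obtain ⟨b, hb⟩ := EReal.exists_eq_coe hx₀g.ne (hg.1 x₀)
  obtain ⟨ℓ₀, hℓ₀⟩ : ∃ ℓ₀ : WeakDual ℝ X →L[ℝ] ℝ, ∀ q, ℓ₀ q = q x₀ :=
    ⟨WeakBilin.eval (topDualPairing ℝ X) x₀, fun _ => rfl⟩
  have hmin : ∀ q ∈ epiConj f + epiConj g, ℓ₀ q.1 - q.2 ≤ a + b := by
    rintro _ ⟨⟨q₁, s₁⟩, h₁, ⟨q₂, s₂⟩, h₂, rfl⟩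
    have := sub_le_of_mem_epiConj h₁ ha.le
    have := sub_le_of_mem_epiConj h₂ hb.le
    rw [hℓ₀]
    change q₁ x₀ + q₂ x₀ - (s₁ + s₂) ≤ a + b
    linarith
  obtain ⟨ℓ, β, hβ, hsep⟩ := exists_affine_sep ((convex_epiConj f).add (convex_epiConj g))
    (isUpwardClosedSnd_realEpigraph _).add_right
    ((epiConj_nonempty hf hfl hfc).add (epiConj_nonempty hg hgl hgc)) hmin hout
  obtain ⟨z, hz⟩ := WeakDual.exists_apply_eq_eval ℓ
  have hfg : f z + g z ≤ β := EReal.add_le_coe_of_forall_coe_lt fun t₁ t₂ ht₁ ht₂ => by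
    obtain ⟨q₁, s₁, h₁, hq₁⟩ := exists_mem_epiConj_lt_sub hf hfl hfc ht₁
    obtain ⟨q₂, s₂, h₂, hq₂⟩ := exists_mem_epiConj_lt_sub hg hgl hgc ht₂
    have := hsep _ (Set.add_mem_add h₁ h₂)
    rw [hz] at this
    change q₁ z + q₂ z - (s₁ + s₂) < β at this
    linarith
  rw [hz] at hβ
  exact hβ.not_ge (EReal.coe_le_coe_iff.1 ((mem_epiConj_iff.1 hpr z).trans hfg))

theorem mem_epsSubdiff_iff_mem_epiConj {f : X → EReal} {x : X} {a ε : ℝ} (ha : f x = a)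
    {p : WeakDual ℝ X} : p ∈ epsSubdiff f ε x ↔ (p, p x - a + ε) ∈ epiConj f := by
  rw [mem_epiConj_iff]
  simp only [epsSubdiff, Set.mem_ofPred_eq, ha, EReal.coe_ne_top, EReal.coe_ne_bot, ne_eq,
    not_false_eq_true, true_and]
  refine forall_congr' fun y => ?_
  rw [map_sub p y x, ← EReal.coe_add, EReal.coe_le_add_coe_iff,
    show p y - p x + a - ε = p y - (p x - a + ε) by ring]

theorem mem_epsSubdiff_of_mem_epiConj {f : X → EReal} {x : X} {a : ℝ} (ha : f x = a)
    {q : WeakDual ℝ X} {s : ℝ} (h : (q, s) ∈ epiConj f) : q ∈ epsSubdiff f (s - q x + a) x :=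
  (mem_epsSubdiff_iff_mem_epiConj ha).2 (by rwa [show q x - a + (s - q x + a) = s by ring])

theorem exists_eq_coe_of_mem_epsSubdiff {f : X → EReal} {ε : ℝ} {x : X} {p : WeakDual ℝ X}
    (hp : p ∈ epsSubdiff f ε x) : ∃ a : ℝ, f x = a :=
  EReal.exists_eq_coe hp.1 hp.2.1

theorem epsSubdiff_mono {f : X → EReal} {x : X} {ε ε' : ℝ} (h : ε ≤ ε') :
    epsSubdiff f ε x ⊆ epsSubdiff f ε' x := fun _ ⟨h₁, h₂, h₃⟩ =>
  ⟨h₁, h₂, fun y => (h₃ y).trans (add_le_add le_rfl (EReal.coe_le_coe_iff.2 h))⟩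

theorem epsSubdiff_add_subset {f g : X → EReal} {x : X} {ε₁ ε₂ : ℝ} :
    epsSubdiff f ε₁ x + epsSubdiff g ε₂ x ⊆ epsSubdiff (fun y => f y + g y) (ε₁ + ε₂) x := by
  rintro _ ⟨p₁, h₁, p₂, h₂, rfl⟩
  change p₁ + p₂ ∈ _
  obtain ⟨a, ha⟩ := exists_eq_coe_of_mem_epsSubdiff h₁
  obtain ⟨b, hb⟩ := exists_eq_coe_of_mem_epsSubdiff h₂
  have hab : f x + g x = ((a + b : ℝ) : EReal) := by rw [ha, hb]; rfl
  rw [mem_epsSubdiff_iff_mem_epiConj (f := fun y => f y + g y) hab]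
  convert add_subset_epiConj_add f g (Set.add_mem_add ((mem_epsSubdiff_iff_mem_epiConj ha).1 h₁)
    ((mem_epsSubdiff_iff_mem_epiConj hb).1 h₂)) using 1
  refine Prod.ext rfl ?_
  change p₁ x + p₂ x - (a + b) + (ε₁ + ε₂) = p₁ x - a + ε₁ + (p₂ x - b + ε₂)
  ring

theorem isClosed_epsSubdiff (f : X → EReal) (ε : ℝ) (x : X) : IsClosed (epsSubdiff f ε x) := by
  by_cases hfin : ∃ a : ℝ, f x = a
  · obtain ⟨a, ha⟩ := hfin
    have : epsSubdiff f ε x = (fun p : WeakDual ℝ X => (p, p x - a + ε)) ⁻¹' epiConj f := by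
      ext p; exact mem_epsSubdiff_iff_mem_epiConj ha
    rw [this]
    exact (isClosed_epiConj f).preimage (continuous_id.prodMk
      (((WeakDual.eval_continuous x).sub continuous_const).add continuous_const))
  · convert isClosed_empty
    exact Set.eq_empty_of_forall_notMem fun p hp => hfin (exists_eq_coe_of_mem_epsSubdiff hp)

theorem mem_epsSubdiff_of_forall_pos {f : X → EReal} {x : X} {ε : ℝ} {p : WeakDual ℝ X}
    (h : ∀ η > 0, p ∈ epsSubdiff f (ε + η) x) : p ∈ epsSubdiff f ε x := by
  obtain ⟨a, ha⟩ := exists_eq_coe_of_mem_epsSubdiff (h 1 one_pos)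
  simp only [mem_epsSubdiff_iff_mem_epiConj ha] at h ⊢
  refine EReal.le_of_forall_lt_iff_le.1 fun z hz => ?_
  have := h (z - (p x - a + ε)) (by linarith [EReal.coe_lt_coe_iff.1 hz])
  rwa [show p x - a + (ε + (z - (p x - a + ε))) = z by ring] at this

theorem mem_closure_iUnion_epsSubdiff_add {f g : X → EReal} {x : X} {a b ε η : ℝ}
    (ha : f x = a) (hb : g x = b) (hη : 0 < η) {p : WeakDual ℝ X}
    (hp : (p, p x - (a + b) + ε) ∈ closure (epiConj f + epiConj g)) :
    p ∈ closure (⋃ (e : ℝ × ℝ) (_ : 0 ≤ e.1 ∧ 0 ≤ e.2 ∧ e.1 + e.2 = ε + η),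
      epsSubdiff f e.1 x + epsSubdiff g e.2 x) := by
  set S : Set (WeakDual ℝ X × ℝ) := {q | q.2 - q.1 x < ε + η - (a + b)}
  have hS : IsOpen S := isOpen_lt
    (continuous_snd.sub ((WeakDual.eval_continuous x).comp continuous_fst)) continuous_const
  have hpS : (p, p x - (a + b) + ε) ∈ S := by
    change p x - (a + b) + ε - p x < ε + η - (a + b)
    linarith
  have hsub : Prod.fst '' (S ∩ (epiConj f + epiConj g)) ⊆
      ⋃ (e : ℝ × ℝ) (_ : 0 ≤ e.1 ∧ 0 ≤ e.2 ∧ e.1 + e.2 = ε + η),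
        epsSubdiff f e.1 x + epsSubdiff g e.2 x := by
    rintro _ ⟨_, ⟨hqS, ⟨q₁, s₁⟩, h₁, ⟨q₂, s₂⟩, h₂, rfl⟩, rfl⟩
    have hε₁ := sub_le_of_mem_epiConj h₁ ha.le
    have hε₂ := sub_le_of_mem_epiConj h₂ hb.le
    change s₁ + s₂ - (q₁ x + q₂ x) < ε + η - (a + b) at hqS
    refine Set.mem_iUnion₂.2 ⟨(s₁ - q₁ x + a, ε + η - (s₁ - q₁ x + a)),
      ⟨by dsimp; linarith, by dsimp; linarith, by dsimp; ring⟩,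
      Set.add_mem_add (mem_epsSubdiff_of_mem_epiConj ha h₁)
        (epsSubdiff_mono ?_ (mem_epsSubdiff_of_mem_epiConj hb h₂))⟩
    dsimp
    linarith
  exact closure_mono hsub
    (image_closure_subset_closure_image continuous_fst ⟨_, hS.inter_closure ⟨hpS, hp⟩, rfl⟩)

theorem stmt0_general {X : Type*} [NormedAddCommGroup X] [NormedSpace ℝ X]
    (f g : X → EReal) (hf : EProper f) (hg : EProper g)
    (hfl : LowerSemicontinuous f) (hgl : LowerSemicontinuous g)
    (hfc : EConvex f) (hgc : EConvex g)
    (hdom : (edom f ∩ edom g).Nonempty) :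
    ∀ (x : X) (ε : ℝ), 0 ≤ ε →
      epsSubdiff (fun y => f y + g y) ε x =
        ⋂ η ∈ Set.Ioi (0 : ℝ),
          closure (⋃ (e : ℝ × ℝ) (_ : 0 ≤ e.1 ∧ 0 ≤ e.2 ∧ e.1 + e.2 = ε + η),
            epsSubdiff f e.1 x + epsSubdiff g e.2 x) := by
  intro x ε _
  ext p
  refine ⟨fun hp => Set.mem_iInter₂.2 fun η hη => ?_,
    fun hp => mem_epsSubdiff_of_forall_pos fun η hη => ?_⟩
  · obtain ⟨hfx, hgx⟩ := (EReal.add_ne_top_iff_ne_top₂ (hf.1 x) (hg.1 x)).1 hp.1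
    obtain ⟨a, ha⟩ := EReal.exists_eq_coe hfx (hf.1 x)
    obtain ⟨b, hb⟩ := EReal.exists_eq_coe hgx (hg.1 x)
    have hab : f x + g x = ((a + b : ℝ) : EReal) := by rw [ha, hb]; rfl
    have hpr := (mem_epsSubdiff_iff_mem_epiConj (f := fun y => f y + g y) hab).1 hp
    exact mem_closure_iUnion_epsSubdiff_add ha hb hη
      (epiConj_add_subset_closure hf hg hfl hgl hfc hgc hdom hpr)
  · refine closure_minimal (Set.iUnion₂_subset fun e he => ?_) (isClosed_epsSubdiff _ _ _)
      (Set.mem_iInter₂.1 hp η hη)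
    rw [← he.2.2]
    exact epsSubdiff_add_subset

theorem stmt0 {X : Type*} [NormedAddCommGroup X] [NormedSpace ℝ X] [CompleteSpace X]
    (f g : X → EReal) (hf : EProper f) (hg : EProper g)
    (hfl : LowerSemicontinuous f) (hgl : LowerSemicontinuous g)
    (hfc : EConvex f) (hgc : EConvex g)
    (hdom : (edom f ∩ edom g).Nonempty) :
    ∀ (x : X) (ε : ℝ), 0 ≤ ε →
      epsSubdiff (fun y => f y + g y) ε x =
        ⋂ η ∈ Set.Ioi (0 : ℝ),
          closure (⋃ (e : ℝ × ℝ) (_ : 0 ≤ e.1 ∧ 0 ≤ e.2 ∧ e.1 + e.2 = ε + η),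
            epsSubdiff f e.1 x + epsSubdiff g e.2 x) :=
  stmt0_general f g hf hg hfl hgl hfc hgc hdom
end
end

section
/- Let f₁, …, f_m : X → (-∞, +∞] be proper lower semicontinuous convex functions on a real Banach space X with ⋂ᵢ dom fᵢ ≠ ∅. If the infimal convolution f₁* □ ⋯ □ f_m* is weak* lower semicontinuous, then for every x ∈ ⋂ᵢ dom fᵢ and every ε > 0, the weak* closure of ∑ᵢ ∂_ε fᵢ(x) is contained in ∑ᵢ ∂_{(m+1)ε} fᵢ(x). -/
open Pointwise Topology Set

noncomputable section

variable {X : Type*} [NormedAddCommGroup X] [NormedSpace ℝ X]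

/-! By Fenchel–Young, `x* ∈ ∂_δ f(x)` iff `f*(x*) ≤ ⟨x*, x⟩ - f(x) + δ`. Summing, `∑ ∂_ε fᵢ(x)` lies
in the sublevel set `{p | (□ fᵢ*)(p) ≤ ⟨p, x⟩ - ∑ fᵢ(x) + mε}`, which is weak* closed because the
infimal convolution is weak* lower semicontinuous; so it contains the closure. For `p` in it, some
decomposition `p = ∑ yᵢ` has `∑ fᵢ*(yᵢ) < ⟨p, x⟩ - ∑ fᵢ(x) + (m+1)ε`, and since every summand is
at least `⟨yᵢ, x⟩ - fᵢ(x)`, each single slack is below `(m+1)ε`, i.e. `yᵢ ∈ ∂_{(m+1)ε} fᵢ(x)`. -/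

lemma EReal.coe_finset_sum {ι : Type*} (s : Finset ι) (c : ι → ℝ) :
    ((∑ i ∈ s, c i : ℝ) : EReal) = ∑ i ∈ s, (c i : EReal) :=
  map_sum (⟨⟨Real.toEReal, EReal.coe_zero⟩, EReal.coe_add⟩ : ℝ →+ EReal) c s

lemma EReal.le_coe_add_of_sum_lt {ι : Type*} [Fintype ι] [DecidableEq ι] {a : ι → EReal}
    {r : ι → ℝ} {δ : ℝ} (hr : ∀ i, (r i : EReal) ≤ a i)
    (hsum : ∑ i, a i < ((∑ i, r i + δ : ℝ) : EReal)) (j : ι) :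
    a j ≤ ((r j + δ : ℝ) : EReal) := by
  set R := ∑ i ∈ Finset.univ.erase j, r i
  have hR : (R : EReal) ≤ ∑ i ∈ Finset.univ.erase j, a i := by
    rw [EReal.coe_finset_sum]
    exact Finset.sum_le_sum fun i _ => hr i
  have hlt : a j + R < ((r j + δ : ℝ) : EReal) + R := by
    calc a j + R ≤ ∑ i, a i := by
          rw [← Finset.add_sum_erase _ _ (Finset.mem_univ j)]; gcongr
      _ < ((∑ i, r i + δ : ℝ) : EReal) := hsum
      _ = ((r j + δ : ℝ) : EReal) + R := by
          rw [← Finset.add_sum_erase _ _ (Finset.mem_univ j), ← EReal.coe_add]; congr 1; ring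
  have := EReal.sub_le_sub hlt.le (le_refl (R : EReal))
  rwa [EReal.add_sub_cancel_right, EReal.add_sub_cancel_right] at this

lemma WeakDual.finset_sum_apply {ι : Type*} (s : Finset ι) (q : ι → WeakDual ℝ X) (x : X) :
    (∑ i ∈ s, q i) x = ∑ i ∈ s, q i x :=
  map_sum (AddMonoidHom.mk' (fun p : WeakDual ℝ X => p x) fun _ _ => rfl) q s

lemma LowerSemicontinuous.isClosed_setOf_le_coe {α : Type*} [TopologicalSpace α] {F : α → EReal}
    {h : α → ℝ} (hF : LowerSemicontinuous F) (hh : Continuous h) :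
    IsClosed {p | F p ≤ (h p : EReal)} :=
  hF.isClosed_epigraph.preimage (continuous_id.prodMk (continuous_coe_real_ereal.comp hh))

lemma coe_sub_toReal_le_fconj {f : X → EReal} {x : X} (hx : f x ≠ ⊤) (q : WeakDual ℝ X) :
    ((q x - (f x).toReal : ℝ) : EReal) ≤ fconj f q :=
  calc ((q x - (f x).toReal : ℝ) : EReal) ≤ (q x : EReal) - f x := by
        rw [EReal.coe_sub]; exact EReal.sub_le_sub le_rfl (EReal.le_coe_toReal hx)
    _ ≤ fconj f q := le_iSup (fun z => (q z : EReal) - f z) x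

lemma mem_epsSubdiff_iff_fconj_le {f : X → EReal} (hbot : ∀ z, f z ≠ ⊥) {x : X} (hx : f x ≠ ⊤)
    (q : WeakDual ℝ X) (δ : ℝ) :
    q ∈ epsSubdiff f δ x ↔ fconj f q ≤ ((q x - (f x).toReal + δ : ℝ) : EReal) := by
  obtain ⟨c, hc⟩ : ∃ c : ℝ, f x = c := ⟨(f x).toReal, (EReal.coe_toReal hx (hbot x)).symm⟩
  simp only [epsSubdiff, fconj, iSup_le_iff, mem_ofPred_eq, hc, EReal.toReal_coe,
    EReal.coe_ne_top, EReal.coe_ne_bot, ne_eq, not_false_eq_true, true_and, map_sub]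
  refine forall_congr' fun z => ?_
  have hz := hbot z
  generalize f z = w at hz ⊢
  induction w using EReal.rec with
  | bot => exact absurd rfl hz
  | coe r => norm_cast; constructor <;> intro <;> linarith
  | top => simp

lemma infConv_fconj_le_of_mem_sum_epsSubdiff {m : ℕ} {f : Fin m → X → EReal}
    (hbot : ∀ i z, f i z ≠ ⊥) {x : X} (hx : ∀ i, f i x ≠ ⊤) {δ : ℝ} {p : WeakDual ℝ X}
    (hp : p ∈ ∑ i, epsSubdiff (f i) δ x) :
    infConv (fun i => fconj (f i)) p ≤ ((p x - ∑ i, (f i x).toReal + m * δ : ℝ) : EReal) := by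
  obtain ⟨q, hq, rfl⟩ := (mem_fintype_sum _ p).1 hp
  calc infConv (fun i => fconj (f i)) (∑ i, q i) ≤ ∑ i, fconj (f i) (q i) :=
        iInf_le_of_le q (iInf_le _ rfl)
    _ ≤ ∑ i, ((q i x - (f i x).toReal + δ : ℝ) : EReal) := Finset.sum_le_sum fun i _ =>
        (mem_epsSubdiff_iff_fconj_le (hbot i) (hx i) _ _).1 (hq i)
    _ = _ := by
        rw [← EReal.coe_finset_sum, WeakDual.finset_sum_apply, Finset.sum_add_distrib,
          Finset.sum_sub_distrib]
        simp

lemma mem_sum_epsSubdiff_of_infConv_fconj_lt {m : ℕ} {f : Fin m → X → EReal}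
    (hbot : ∀ i z, f i z ≠ ⊥) {x : X} (hx : ∀ i, f i x ≠ ⊤) {δ : ℝ} {p : WeakDual ℝ X}
    (hp : infConv (fun i => fconj (f i)) p < ((p x - ∑ i, (f i x).toReal + δ : ℝ) : EReal)) :
    p ∈ ∑ i, epsSubdiff (f i) δ x := by
  obtain ⟨y, hy, hlt⟩ : ∃ y : Fin m → WeakDual ℝ X, ∑ i, y i = p ∧
      ∑ i, fconj (f i) (y i) < ((p x - ∑ i, (f i x).toReal + δ : ℝ) : EReal) := by
    simpa only [infConv, iInf_lt_iff, exists_prop] using hp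
  refine (mem_fintype_sum _ p).2 ⟨y, fun j => ?_, hy⟩
  refine (mem_epsSubdiff_iff_fconj_le (hbot j) (hx j) _ _).2 <|
    EReal.le_coe_add_of_sum_lt (fun i => coe_sub_toReal_le_fconj (hx i) (y i)) ?_ j
  rwa [Finset.sum_sub_distrib, ← WeakDual.finset_sum_apply, hy]

theorem stmt3_general {X : Type*} [NormedAddCommGroup X] [NormedSpace ℝ X]
    {m : ℕ} (f : Fin m → X → EReal)
    (hp : ∀ i, EProper (f i))
    (hlsc : LowerSemicontinuous (infConv (fun i => fconj (f i)))) :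
    ∀ x ∈ ⋂ i, edom (f i), ∀ ε > (0 : ℝ),
      closure (∑ i, epsSubdiff (f i) ε x) ⊆
        ∑ i, epsSubdiff (f i) (((m : ℝ) + 1) * ε) x := by
  intro x hx ε hε
  have hbot : ∀ i z, f i z ≠ ⊥ := fun i => (hp i).1
  have hfin : ∀ i, f i x ≠ ⊤ := fun i => (mem_iInter.1 hx i).ne
  have hclosed := hlsc.isClosed_setOf_le_coe (h := fun p => p x - ∑ i, (f i x).toReal + m * ε)
    (((WeakDual.eval_continuous x).sub continuous_const).add continuous_const)
  intro p hp_closure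
  have hp_le := closure_minimal (fun q hq => infConv_fconj_le_of_mem_sum_epsSubdiff hbot hfin hq)
    hclosed hp_closure
  -- the infimal convolution need not be attained, hence the extra `ε` of room
  refine mem_sum_epsSubdiff_of_infConv_fconj_lt hbot hfin (lt_of_le_of_lt hp_le ?_)
  exact_mod_cast (by linarith : p x - ∑ i, (f i x).toReal + m * ε <
    p x - ∑ i, (f i x).toReal + ((m : ℝ) + 1) * ε)

theorem stmt3 {X : Type*} [NormedAddCommGroup X] [NormedSpace ℝ X] [CompleteSpace X]
    {m : ℕ} (hm : 1 ≤ m) (f : Fin m → X → EReal)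
    (hp : ∀ i, EProper (f i)) (hl : ∀ i, LowerSemicontinuous (f i)) (hc : ∀ i, EConvex (f i))
    (hdom : (⋂ i, edom (f i)).Nonempty)
    (hlsc : LowerSemicontinuous (infConv (fun i => fconj (f i)))) :
    ∀ x ∈ ⋂ i, edom (f i), ∀ ε > (0 : ℝ),
      closure (∑ i, epsSubdiff (f i) ε x) ⊆
        ∑ i, epsSubdiff (f i) (((m : ℝ) + 1) * ε) x :=
  stmt3_general f hp hlsc
end
end

section
/- Let f₁, …, f_m : X → (-∞, +∞] be proper convex functions on a real Banach space X with ⋂ᵢ dom fᵢ ≠ ∅. If (∑ᵢ fᵢ)* = f₁* □ ⋯ □ f_m* on X* and the infimal convolution is exact (attained) everywhere, then ∂(f₁+⋯+f_m)(x) = ∂f₁(x) + ⋯ + ∂f_m(x) for all x ∈ X. -/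
open Pointwise Topology Set

noncomputable section

variable {X : Type*} [NormedAddCommGroup X] [NormedSpace ℝ X]

/-!
Fenchel–Young: for `f x` finite, `p ∈ ∂f(x)` exactly when `f* p + f x ≤ p x`, and `≥` always
holds. If `p ∈ ∂(∑ fᵢ)(x)` and `p = ∑ yᵢ` attains `(∑ fᵢ)* p = ∑ fᵢ* yᵢ`, then summing the
Fenchel–Young inequalities for the pairs `(fᵢ, yᵢ)` gives equality in the sum, hence in each
term, so `yᵢ ∈ ∂fᵢ(x)`. The reverse inclusion `∑ ∂fᵢ(x) ⊆ ∂(∑ fᵢ)(x)` holds for any functions.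
-/

namespace EReal

lemma coe_finset_sum_s6 {ι : Type*} (s : Finset ι) (c : ι → ℝ) :
    ((∑ i ∈ s, c i : ℝ) : EReal) = ∑ i ∈ s, (c i : EReal) := by
  classical
  induction s using Finset.induction_on with
  | empty => simp
  | insert i s hi ih => simp [Finset.sum_insert hi, ih]

lemma sum_eq_top_of_mem {ι : Type*} {s : Finset ι} {g : ι → EReal} (hbot : ∀ i ∈ s, g i ≠ ⊥)
    {j : ι} (hj : j ∈ s) (htop : g j = ⊤) : ∑ i ∈ s, g i = ⊤ := by
  classical
  rw [← Finset.add_sum_erase s g hj, htop, top_add_of_ne_bot]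
  exact Finset.sum_induction _ (· ≠ ⊥) (fun _ _ ha hb => add_ne_bot_iff.2 ⟨ha, hb⟩)
    zero_ne_bot (fun i hi => hbot i (Finset.mem_of_mem_erase hi))

lemma le_of_sum_le_sum {ι : Type*} {s : Finset ι} {b : ι → EReal} {c : ι → ℝ}
    (hcb : ∀ i ∈ s, (c i : EReal) ≤ b i) (hsum : ∑ i ∈ s, b i ≤ ∑ i ∈ s, (c i : EReal))
    {j : ι} (hj : j ∈ s) : b j ≤ c j := by
  classical
  by_contra! hlt
  rw [← Finset.add_sum_erase s b hj, ← Finset.add_sum_erase s _ hj, ← coe_finset_sum_s6] at hsum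
  have hrest : ((∑ i ∈ s.erase j, c i : ℝ) : EReal) ≤ ∑ i ∈ s.erase j, b i := by
    rw [coe_finset_sum_s6]
    exact Finset.sum_le_sum fun i hi => hcb i (Finset.mem_of_mem_erase hi)
  exact (add_lt_add_right_coe hlt _).not_ge (hsum.trans' (add_le_add le_rfl hrest))

lemma coe_le_iff_sub_le {e : EReal} (u v : ℝ) :
    (u : EReal) ≤ e ↔ (v : EReal) - e ≤ ((v - u : ℝ) : EReal) := by
  induction e using EReal.rec with
  | bot => simp [-EReal.coe_sub]
  | coe e => norm_cast; constructor <;> intro <;> linarith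
  | top => simp

end EReal

lemma WeakDual.sum_apply {ι : Type*} (s : Finset ι) (y : ι → WeakDual ℝ X) (x : X) :
    (∑ i ∈ s, y i) x = ∑ i ∈ s, y i x :=
  map_sum ((topDualPairing ℝ X).flip x) y s

lemma mem_subdiff_iff_of_eq_coe {f : X → EReal} {x : X} {a : ℝ} (hx : f x = a)
    (p : WeakDual ℝ X) : p ∈ subdiff f x ↔ ∀ z, ((p (z - x) + a : ℝ) : EReal) ≤ f z := by
  simp [subdiff, epsSubdiff, hx]

lemma mem_subdiff_iff_fconj_le {f : X → EReal} {x : X} {a : ℝ} (hx : f x = a)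
    (p : WeakDual ℝ X) : p ∈ subdiff f x ↔ fconj f p ≤ ((p x - a : ℝ) : EReal) := by
  rw [mem_subdiff_iff_of_eq_coe hx, fconj, iSup_le_iff]
  refine forall_congr' fun z => ?_
  rw [EReal.coe_le_iff_sub_le _ (p z), map_sub]
  ring_nf

lemma coe_sub_le_fconj {f : X → EReal} {x : X} {a : ℝ} (hx : f x = a) (p : WeakDual ℝ X) :
    ((p x - a : ℝ) : EReal) ≤ fconj f p :=
  le_iSup_of_le x (by rw [hx]; rfl)

theorem sum_subdiff_subset_subdiff_sum {ι : Type*} [Fintype ι] (f : ι → X → EReal) (x : X) :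
    ∑ i, subdiff (f i) x ⊆ subdiff (fun z => ∑ i, f i z) x := by
  intro p hp
  obtain ⟨y, hy, rfl⟩ := Set.mem_fintype_sum _ _ |>.1 hp
  have hfx : ∀ i, f i x = (f i x).toReal := fun i => (EReal.coe_toReal (hy i).1 (hy i).2.1).symm
  have hFx : ∑ i, f i x = ((∑ i, (f i x).toReal : ℝ) : EReal) := by
    rw [EReal.coe_finset_sum_s6]
    exact Finset.sum_congr rfl fun i _ => hfx i
  rw [mem_subdiff_iff_of_eq_coe (f := fun z => ∑ i, f i z) hFx]
  intro z
  rw [WeakDual.sum_apply, ← Finset.sum_add_distrib, EReal.coe_finset_sum_s6]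
  exact Finset.sum_le_sum fun i _ => (mem_subdiff_iff_of_eq_coe (hfx i) (y i)).1 (hy i) z

theorem mem_subdiff_of_fconj_sum_eq {ι : Type*} [Fintype ι] {f : ι → X → EReal} {x : X}
    {a : ι → ℝ} (hfx : ∀ i, f i x = a i) {y : ι → WeakDual ℝ X}
    (hconj : fconj (fun z => ∑ i, f i z) (∑ i, y i) = ∑ i, fconj (f i) (y i))
    (hy : ∑ i, y i ∈ subdiff (fun z => ∑ i, f i z) x) (i : ι) : y i ∈ subdiff (f i) x := by
  have hFx : ∑ i, f i x = ((∑ i, a i : ℝ) : EReal) := by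
    rw [EReal.coe_finset_sum_s6]
    exact Finset.sum_congr rfl fun i _ => hfx i
  rw [mem_subdiff_iff_fconj_le (f := fun z => ∑ i, f i z) hFx, hconj, WeakDual.sum_apply,
    ← Finset.sum_sub_distrib, EReal.coe_finset_sum_s6] at hy
  rw [mem_subdiff_iff_fconj_le (hfx i)]
  exact EReal.le_of_sum_le_sum (fun j _ => coe_sub_le_fconj (hfx j) (y j)) hy (Finset.mem_univ i)

theorem stmt6_general {X : Type*} [NormedAddCommGroup X] [NormedSpace ℝ X]
    {m : ℕ} (f : Fin m → X → EReal)
    (hp : ∀ i, EProper (f i))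
    (heq : ∀ p : WeakDual ℝ X,
      fconj (fun x => ∑ i, f i x) p = infConv (fun i => fconj (f i)) p)
    (hexact : ∀ p : WeakDual ℝ X, infConvExactAt (fun i => fconj (f i)) p) :
    ∀ x : X, subdiff (fun y => ∑ i, f i y) x = ∑ i, subdiff (f i) x := by
  intro x
  refine Set.Subset.antisymm (fun p hpx => ?_) (sum_subdiff_subset_subdiff_sum f x)
  have hfin : ∀ i, f i x ≠ ⊤ := fun i hi =>
    hpx.1 (EReal.sum_eq_top_of_mem (fun j _ => (hp j).1 x) (Finset.mem_univ i) hi)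
  obtain ⟨y, rfl, hy⟩ := hexact p
  refine Set.mem_fintype_sum _ _ |>.2 ⟨y, fun i => ?_, rfl⟩
  exact mem_subdiff_of_fconj_sum_eq (fun i => (EReal.coe_toReal (hfin i) ((hp i).1 x)).symm)
    ((heq _).trans hy) hpx i

theorem stmt6 {X : Type*} [NormedAddCommGroup X] [NormedSpace ℝ X] [CompleteSpace X]
    {m : ℕ} (hm : 1 ≤ m) (f : Fin m → X → EReal)
    (hp : ∀ i, EProper (f i)) (hc : ∀ i, EConvex (f i))
    (hdom : (⋂ i, edom (f i)).Nonempty)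
    (heq : ∀ p : WeakDual ℝ X,
      fconj (fun x => ∑ i, f i x) p = infConv (fun i => fconj (f i)) p)
    (hexact : ∀ p : WeakDual ℝ X, infConvExactAt (fun i => fconj (f i)) p) :
    ∀ x : X, subdiff (fun y => ∑ i, f i y) x = ∑ i, subdiff (f i) x :=
  stmt6_general f hp heq hexact
end
end

section
/- Let C := {(x, y) ∈ ℝ² : 2x + y² ≤ 0} and D := {(x, y) ∈ ℝ² : x ≥ 0}, and set f := ι_C, g := ι_D (indicator functions). Then for every ε > 0, ∂_ε f(0,0) = ⋃_{u ≥ 0} {u} × [−√(2εu), √(2εu)] and ∂_ε g(0,0) = (−∞, 0] × {0}, and consequently ∂_ε f(0,0) + ∂_ε g(0,0) = ℝ². -/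
/-!
Both functions are indicators of sets containing the origin, so `p ∈ ∂_ε ι_C (0,0)` just says
`p ≤ ε` on `C`. On the half-plane `x ≥ 0` a linear functional is bounded only if it is
`(a, 0)` with `a ≤ 0`. On the parabolic region `2x + y² ≤ 0` the worst points are on the
boundary `x = -y²/2`, where `(a, b)` gives `b y - a y²/2`, whose supremum is `b²/(2a)`; so the
condition is `a ≥ 0` and `b² ≤ 2εa`. Any `(a, b)` splits as `(u, b) + (a - u, 0)` with
`u ≥ max a (b²/(2ε))`, so the two ε-subdifferentials sum to the whole dual.
-/


open Pointwise Topology Set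

noncomputable section

variable {X : Type*} [NormedAddCommGroup X] [NormedSpace ℝ X]

theorem mem_epsSubdiff_indicator_iff (c : X → Prop) [DecidablePred c] {x : X} (hx : c x)
    (ε : ℝ) (p : WeakDual ℝ X) :
    p ∈ epsSubdiff (fun z => if c z then (0 : EReal) else ⊤) ε x ↔ ∀ z, c z → p (z - x) ≤ ε := by
  simp only [epsSubdiff, mem_ofPred_eq, if_pos hx, add_zero]
  refine ⟨fun ⟨_, _, h⟩ z hz => ?_, fun h => ⟨EReal.zero_ne_top, EReal.zero_ne_bot, fun z => ?_⟩⟩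
  · have := h z
    rw [if_pos hz, zero_add] at this
    exact_mod_cast this
  · by_cases hz : c z
    · rw [if_pos hz, zero_add]
      exact_mod_cast h z hz
    · rw [if_neg hz, EReal.top_add_coe]
      exact le_top

namespace WeakDual

theorem apply_prod (p : WeakDual ℝ (ℝ × ℝ)) (z : ℝ × ℝ) :
    p z = z.1 * p (1, 0) + z.2 * p (0, 1) := by
  have hz : z = z.1 • ((1 : ℝ), (0 : ℝ)) + z.2 • ((0 : ℝ), (1 : ℝ)) := by ext <;> simp
  conv_lhs => rw [hz]
  simp only [map_add, map_smul, smul_eq_mul]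

theorem sub_apply (p q : WeakDual ℝ X) (x : X) : (p - q) x = p x - q x := rfl

def ofCoords (a b : ℝ) : WeakDual ℝ (ℝ × ℝ) :=
  (a • ContinuousLinearMap.fst ℝ ℝ ℝ + b • ContinuousLinearMap.snd ℝ ℝ ℝ : (ℝ × ℝ) →L[ℝ] ℝ)

theorem ofCoords_apply (a b : ℝ) (z : ℝ × ℝ) : ofCoords a b z = a * z.1 + b * z.2 := rfl

end WeakDual

theorem sq_le_of_forall_mul_sub_sq_le {a b ε : ℝ} (hε : 0 < ε) (ha : 0 ≤ a)
    (h : ∀ t, b * t - a * t ^ 2 / 2 ≤ ε) : b ^ 2 ≤ 2 * ε * a := by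
  rcases eq_or_ne b 0 with rfl | hb
  · norm_num
    positivity
  -- `t = 2ε/b` gives `ε ≤ 2aε²/b²`
  have ht := h (2 * ε / b)
  field_simp at ht
  rw [div_le_one (by positivity)] at ht
  linarith

theorem forall_parabola_le_iff {a b ε : ℝ} (hε : 0 < ε) :
    (∀ x y : ℝ, 2 * x + y ^ 2 ≤ 0 → x * a + y * b ≤ ε) ↔ 0 ≤ a ∧ b ^ 2 ≤ 2 * ε * a := by
  constructor
  · intro h
    have ha : 0 ≤ a := by
      by_contra! ha
      have := h ((ε + 1) / a) 0 (by nlinarith [div_neg_of_pos_of_neg (by linarith : 0 < ε + 1) ha])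
      rw [div_mul_cancel₀ _ ha.ne] at this
      linarith
    refine ⟨ha, sq_le_of_forall_mul_sub_sq_le hε ha fun t => ?_⟩
    linarith [h (-t ^ 2 / 2) t (by linarith)]
  · rintro ⟨ha, hb⟩ x y hxy
    have hx : x * a ≤ -y ^ 2 / 2 * a := mul_le_mul_of_nonneg_right (by linarith) ha
    -- `(2ε - by)² + (2εa - b²)y² = 2ε(2ε - 2by + ay²)`
    nlinarith [sq_nonneg (2 * ε - b * y), mul_nonneg (sub_nonneg.2 hb) (sq_nonneg y)]

theorem forall_halfPlane_le_iff {a b ε : ℝ} (hε : 0 ≤ ε) :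
    (∀ x y : ℝ, 0 ≤ x → x * a + y * b ≤ ε) ↔ a ≤ 0 ∧ b = 0 := by
  constructor
  · intro h
    refine ⟨?_, ?_⟩
    · by_contra! ha
      have := h ((ε + 1) / a) 0 (by positivity)
      rw [div_mul_cancel₀ _ ha.ne'] at this
      linarith
    · by_contra hb
      have := h 0 ((ε + 1) / b) le_rfl
      rw [div_mul_cancel₀ _ hb] at this
      linarith
  · rintro ⟨ha, rfl⟩ x y hx
    nlinarith

theorem epsSubdiff_parabola {ε : ℝ} (hε : 0 < ε) :
    epsSubdiff (fun z : ℝ × ℝ => if 2 * z.1 + z.2 ^ 2 ≤ 0 then (0 : EReal) else ⊤) ε 0 =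
      {p | 0 ≤ p (1, 0) ∧ p (0, 1) ^ 2 ≤ 2 * ε * p (1, 0)} := by
  ext p
  rw [mem_epsSubdiff_indicator_iff (fun z : ℝ × ℝ => 2 * z.1 + z.2 ^ 2 ≤ 0) (by simp), mem_ofPred_eq,
    ← forall_parabola_le_iff hε, Prod.forall]
  refine forall₂_congr fun x y => imp_congr_right fun _ => ?_
  rw [sub_zero, WeakDual.apply_prod]

theorem epsSubdiff_halfPlane {ε : ℝ} (hε : 0 ≤ ε) :
    epsSubdiff (fun z : ℝ × ℝ => if 0 ≤ z.1 then (0 : EReal) else ⊤) ε 0 =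
      {p | p (1, 0) ≤ 0 ∧ p (0, 1) = 0} := by
  ext p
  rw [mem_epsSubdiff_indicator_iff (fun z : ℝ × ℝ => 0 ≤ z.1) le_rfl, mem_ofPred_eq,
    ← forall_halfPlane_le_iff hε, Prod.forall]
  refine forall₂_congr fun x y => imp_congr_right fun _ => ?_
  rw [sub_zero, WeakDual.apply_prod]

theorem parabola_add_halfPlane_eq_univ {ε : ℝ} (hε : 0 < ε) :
    {p : WeakDual ℝ (ℝ × ℝ) | 0 ≤ p (1, 0) ∧ p (0, 1) ^ 2 ≤ 2 * ε * p (1, 0)} +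
      {p | p (1, 0) ≤ 0 ∧ p (0, 1) = 0} = univ := by
  refine eq_univ_of_forall fun p => ?_
  set u := max (p (1, 0)) (p (0, 1) ^ 2 / (2 * ε))
  have hau : p (1, 0) ≤ u := le_max_left _ _
  have hbu : p (0, 1) ^ 2 / (2 * ε) ≤ u := le_max_right _ _
  have hq : WeakDual.ofCoords u (p (0, 1)) ∈ {p : WeakDual ℝ (ℝ × ℝ) |
      0 ≤ p (1, 0) ∧ p (0, 1) ^ 2 ≤ 2 * ε * p (1, 0)} := by
    simp only [mem_ofPred_eq, WeakDual.ofCoords_apply, mul_one, mul_zero, add_zero, zero_add]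
    refine ⟨(by positivity : 0 ≤ p (0, 1) ^ 2 / (2 * ε)).trans hbu, ?_⟩
    rwa [div_le_iff₀ (by positivity), mul_comm] at hbu
  have hr : p - WeakDual.ofCoords u (p (0, 1)) ∈ {p : WeakDual ℝ (ℝ × ℝ) |
      p (1, 0) ≤ 0 ∧ p (0, 1) = 0} := by
    simp only [mem_ofPred_eq, WeakDual.sub_apply, WeakDual.ofCoords_apply]
    constructor <;> linarith
  exact mem_add.2 ⟨_, hq, _, hr, add_sub_cancel _ p⟩

theorem stmt9 :
    ∀ ε > (0 : ℝ),
      epsSubdiff (fun z : ℝ × ℝ => if 2 * z.1 + z.2 ^ 2 ≤ 0 then (0 : EReal) else ⊤) ε 0 =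
        {p : WeakDual ℝ (ℝ × ℝ) |
          ∃ u : ℝ, 0 ≤ u ∧ p (1, 0) = u ∧ |p (0, 1)| ≤ Real.sqrt (2 * ε * u)} ∧
      epsSubdiff (fun z : ℝ × ℝ => if 0 ≤ z.1 then (0 : EReal) else ⊤) ε 0 =
        {p : WeakDual ℝ (ℝ × ℝ) | p (1, 0) ≤ 0 ∧ p (0, 1) = 0} ∧
      epsSubdiff (fun z : ℝ × ℝ => if 2 * z.1 + z.2 ^ 2 ≤ 0 then (0 : EReal) else ⊤) ε 0 +
        epsSubdiff (fun z : ℝ × ℝ => if 0 ≤ z.1 then (0 : EReal) else ⊤) ε 0 = Set.univ := by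
  intro ε hε
  have hsqrt : {p : WeakDual ℝ (ℝ × ℝ) |
      ∃ u : ℝ, 0 ≤ u ∧ p (1, 0) = u ∧ |p (0, 1)| ≤ Real.sqrt (2 * ε * u)} =
        {p | 0 ≤ p (1, 0) ∧ p (0, 1) ^ 2 ≤ 2 * ε * p (1, 0)} := by
    ext p
    simp only [mem_ofPred_eq, ↓existsAndEq, true_and]
    refine and_congr_right fun ha => ?_
    rw [Real.le_sqrt (abs_nonneg _) (by positivity), sq_abs]
  rw [epsSubdiff_parabola hε, epsSubdiff_halfPlane hε.le, hsqrt]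
  exact ⟨rfl, rfl, parabola_add_halfPlane_eq_univ hε⟩
end
end

section
/- Let f₁, …, f_m : X → (-∞, +∞] be proper sublinear lower semicontinuous functions on a real Banach space X. Then ∑ᵢ ∂fᵢ(0) is weak* closed if and only if (∑ᵢ fᵢ)* = f₁* □ ⋯ □ f_m* on X*. -/
open Pointwise Topology Set

noncomputable section

variable {X : Type*} [NormedAddCommGroup X] [NormedSpace ℝ X]

/-- `f` is sublinear. -/
def ESublinear {X : Type*} [NormedAddCommGroup X] [NormedSpace ℝ X] (f : X → EReal) : Prop :=
  f 0 = 0 ∧ (∀ x ∈ edom f, ∀ y ∈ edom f, f (x + y) ≤ f x + f y) ∧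
    ∀ t : ℝ, 0 ≤ t → ∀ x ∈ edom f, f (t • x) = (t : EReal) * f x

/-!
For a sublinear `g`, the gap `q - g` is either `≤ 0` everywhere or grows linearly along a ray, so
`g*` is the indicator of `∂g(0)`. The sum `∑ᵢ fᵢ` is again sublinear, and the infimal convolution of
indicators is the indicator of the Minkowski sum, so the identity says exactly
`∂(∑ᵢ fᵢ)(0) = ∑ᵢ ∂fᵢ(0)`. The left side is weak* closed, which gives one direction. Conversely,
separating points from the epigraph (a closed convex cone in `X × ℝ`) shows that each `fᵢ` is the
support function of `∂fᵢ(0)`, hence `∑ᵢ fᵢ` is the support function of `∑ᵢ ∂fᵢ(0)`; a weak* closed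
convex set is recovered from its support function by Hahn–Banach in the weak* dual, whose
continuous functionals are evaluations.
-/

namespace EReal

lemma sum_ne_bot {ι : Type*} {s : Finset ι} {a : ι → EReal} (h : ∀ i ∈ s, a i ≠ ⊥) :
    ∑ i ∈ s, a i ≠ ⊥ := by
  induction s using Finset.cons_induction with
  | empty => simp
  | cons i s hi ih =>
    rw [Finset.sum_cons, ne_eq, add_eq_bot_iff, not_or]
    exact ⟨h i (s.mem_cons_self i), ih fun j hj => h j (Finset.mem_cons_of_mem hj)⟩

lemma sum_eq_top {ι : Type*} {s : Finset ι} {a : ι → EReal} (h : ∀ i ∈ s, a i ≠ ⊥) {j : ι}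
    (hj : j ∈ s) (ha : a j = ⊤) : ∑ i ∈ s, a i = ⊤ := by
  classical
  rw [← Finset.add_sum_erase s a hj, ha, top_add_iff_ne_bot]
  exact sum_ne_bot fun i hi => h i (Finset.mem_of_mem_erase hi)

lemma coe_mul_sum_of_nonneg {ι : Type*} (s : Finset ι) (a : ι → EReal) {t : ℝ} (ht : 0 ≤ t) :
    (t : EReal) * ∑ i ∈ s, a i = ∑ i ∈ s, (t : EReal) * a i := by
  induction s using Finset.cons_induction with
  | empty => simp
  | cons i s hi ih =>
    rw [Finset.sum_cons, Finset.sum_cons,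
      left_distrib_of_nonneg_of_ne_top (EReal.coe_nonneg.2 ht) (coe_ne_top t), ih]

end EReal

lemma ESublinear.sum {ι : Type*} (s : Finset ι) {f : ι → X → EReal} (hbot : ∀ i x, f i x ≠ ⊥)
    (hs : ∀ i, ESublinear (f i)) : ESublinear fun x => ∑ i ∈ s, f i x := by
  have hdom : ∀ x ∈ edom (fun x => ∑ i ∈ s, f i x), ∀ i ∈ s, x ∈ edom (f i) := fun x hx i hi =>
    lt_top_iff_ne_top.2 fun htop => hx.ne (EReal.sum_eq_top (fun j _ => hbot j x) hi htop)
  refine ⟨Finset.sum_eq_zero fun i _ => (hs i).1, fun x hx y hy => ?_, fun t ht x hx => ?_⟩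
  · calc ∑ i ∈ s, f i (x + y) ≤ ∑ i ∈ s, (f i x + f i y) :=
          Finset.sum_le_sum fun i hi => (hs i).2.1 x (hdom x hx i hi) y (hdom y hy i hi)
      _ = _ := Finset.sum_add_distrib
  · rw [EReal.coe_mul_sum_of_nonneg _ _ ht]
    exact Finset.sum_congr rfl fun i hi => (hs i).2.2 t ht x (hdom x hx i hi)

section Subdifferential

variable {f : X → EReal}

lemma mem_subdiff_zero (hf0 : f 0 = 0) {q : WeakDual ℝ X} :
    q ∈ subdiff f 0 ↔ ∀ x, (q x : EReal) ≤ f x := by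
  simp [subdiff, epsSubdiff, hf0]

lemma mem_subdiff_zero_of_forall_coe (hf0 : f 0 = 0) (hbot : ∀ x, f x ≠ ⊥) {q : WeakDual ℝ X}
    (h : ∀ x (c : ℝ), f x = c → q x ≤ c) : q ∈ subdiff f 0 := by
  refine (mem_subdiff_zero hf0).2 fun x => ?_
  obtain htop | htop := eq_or_ne (f x) ⊤
  · simp [htop]
  · rw [← EReal.coe_toReal htop (hbot x)]
    exact EReal.coe_le_coe_iff.2 (h x _ (EReal.coe_toReal htop (hbot x)).symm)

lemma isClosed_subdiff_zero (hf0 : f 0 = 0) : IsClosed (subdiff f 0) := by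
  have : subdiff f 0 = ⋂ x, {q : WeakDual ℝ X | (q x : EReal) ≤ f x} := by
    ext; simp [mem_subdiff_zero hf0]
  rw [this]
  exact isClosed_iInter fun x =>
    isClosed_le (continuous_coe_real_ereal.comp (WeakDual.eval_continuous x)) continuous_const

lemma convex_subdiff_zero (hf0 : f 0 = 0) (hbot : ∀ x, f x ≠ ⊥) : Convex ℝ (subdiff f 0) := by
  intro q₁ h₁ q₂ h₂ a b ha hb hab
  rw [mem_subdiff_zero hf0] at h₁ h₂
  refine mem_subdiff_zero_of_forall_coe hf0 hbot fun x c hc => ?_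
  have hq₁ : q₁ x ≤ c := EReal.coe_le_coe_iff.1 (hc ▸ h₁ x)
  have hq₂ : q₂ x ≤ c := EReal.coe_le_coe_iff.1 (hc ▸ h₂ x)
  calc a * q₁ x + b * q₂ x ≤ a * c + b * c :=
        add_le_add (mul_le_mul_of_nonneg_left hq₁ ha) (mul_le_mul_of_nonneg_left hq₂ hb)
    _ = c := by rw [← add_mul, hab, one_mul]

end Subdifferential

open scoped Classical in
def convexIndicator {E : Type*} (A : Set E) (q : E) : EReal := if q ∈ A then 0 else ⊤

lemma convexIndicator_nonneg {E : Type*} (A : Set E) (q : E) : 0 ≤ convexIndicator A q := by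
  unfold convexIndicator; split_ifs <;> simp

lemma convexIndicator_injective {E : Type*} :
    Function.Injective (convexIndicator : Set E → E → EReal) := by
  intro A B h
  ext q
  have := congrFun h q
  unfold convexIndicator at this
  split_ifs at this <;> simp_all

lemma sum_convexIndicator {ι E : Type*} [Fintype ι] (A : ι → Set E) (y : ι → E) :
    ∑ i, convexIndicator (A i) (y i) = convexIndicator (univ.pi A) y := by
  by_cases hy : y ∈ univ.pi A
  · rw [convexIndicator, if_pos hy]
    exact Finset.sum_eq_zero fun i _ => if_pos (hy i (mem_univ i))
  · rw [convexIndicator, if_neg hy]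
    obtain ⟨j, hj⟩ : ∃ j, y j ∉ A j := by simpa [Set.mem_univ_pi] using hy
    have hbot : ∀ i ∈ Finset.univ, convexIndicator (A i) (y i) ≠ ⊥ := fun i _ =>
      (EReal.bot_lt_zero.trans_le (convexIndicator_nonneg _ _)).ne'
    exact EReal.sum_eq_top hbot (Finset.mem_univ j) (if_neg hj)

lemma infConv_convexIndicator {m : ℕ} (A : Fin m → Set (WeakDual ℝ X)) :
    infConv (fun i => convexIndicator (A i)) = convexIndicator (∑ i, A i) := by
  funext p
  simp only [infConv, sum_convexIndicator]
  by_cases hp : p ∈ ∑ i, A i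
  · obtain ⟨y, hy, hsum⟩ := (Set.mem_fintype_sum A p).1 hp
    conv_rhs => rw [convexIndicator, if_pos hp]
    refine le_antisymm ?_ (le_iInf₂ fun z _ => convexIndicator_nonneg _ z)
    calc ⨅ z, ⨅ (_ : ∑ i, z i = p), convexIndicator (univ.pi A) z
        ≤ convexIndicator (univ.pi A) y := iInf₂_le y hsum
      _ = 0 := if_pos fun i _ => hy i
  · conv_rhs => rw [convexIndicator, if_neg hp]
    refine iInf₂_eq_top.2 fun y hsum => if_neg fun hy => hp ?_
    exact (Set.mem_fintype_sum A p).2 ⟨y, fun i => hy i (mem_univ i), hsum⟩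

lemma fconj_eq_top_of_lt {g : X → EReal} (hg : ESublinear g) {q : WeakDual ℝ X} {x : X}
    (hx : g x < q x) : fconj g q = ⊤ := by
  obtain hbot | hbot := eq_or_ne (g x) ⊥
  · refine top_le_iff.1 (le_iSup_of_le x ?_)
    rw [hbot, EReal.coe_sub_bot]
  obtain ⟨c, hc⟩ : ∃ c : ℝ, g x = c :=
    ⟨(g x).toReal, (EReal.coe_toReal (hx.trans (EReal.coe_lt_top _)).ne hbot).symm⟩
  have hgap : 0 < q x - c := sub_pos.2 (EReal.coe_lt_coe_iff.1 (hc ▸ hx))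
  refine (EReal.eq_top_iff_forall_lt _).2 fun y => ?_
  -- along the ray through `x` the gap `q - g` grows linearly
  obtain ⟨n, hn⟩ := exists_nat_gt (y / (q x - c))
  have hray :
      ((q ((n : ℝ) • x) : ℝ) : EReal) - g ((n : ℝ) • x) = ((n * (q x - c) : ℝ) : EReal) := by
    rw [hg.2.2 n n.cast_nonneg x (show g x < ⊤ from hc ▸ EReal.coe_lt_top c), hc, map_smul,
      smul_eq_mul, ← EReal.coe_mul, ← EReal.coe_sub, mul_sub]
  calc (y : EReal) < ((n * (q x - c) : ℝ) : EReal) :=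
        EReal.coe_lt_coe_iff.2 ((div_lt_iff₀ hgap).1 hn)
    _ ≤ fconj g q := hray ▸ le_iSup (fun z => ((q z : ℝ) : EReal) - g z) ((n : ℝ) • x)

lemma fconj_eq_convexIndicator {g : X → EReal} (hg : ESublinear g) :
    fconj g = convexIndicator (subdiff g 0) := by
  funext q
  by_cases hq : q ∈ subdiff g 0
  · rw [convexIndicator, if_pos hq]
    refine le_antisymm (iSup_le fun x => EReal.sub_nonpos.2 ((mem_subdiff_zero hg.1).1 hq x)) ?_
    exact le_iSup_of_le 0 (by simp [hg.1])
  · rw [convexIndicator, if_neg hq]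
    obtain ⟨x, hx⟩ := not_forall.1 (mt (mem_subdiff_zero hg.1).2 hq)
    exact fconj_eq_top_of_lt hg (not_le.1 hx)

def epigraphCone (f : X → EReal) (hl : LowerSemicontinuous f) (hs : ESublinear f) :
    ProperCone ℝ (X × ℝ) where
  carrier := {z | f z.1 ≤ z.2}
  add_mem' {z w} hz hw := by
    have hz' : z.1 ∈ edom f := hz.trans_lt (EReal.coe_lt_top _)
    have hw' : w.1 ∈ edom f := hw.trans_lt (EReal.coe_lt_top _)
    calc f (z + w).1 ≤ f z.1 + f w.1 := hs.2.1 _ hz' _ hw'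
      _ ≤ z.2 + w.2 := add_le_add hz hw
      _ = (z + w).2 := (EReal.coe_add _ _).symm
  zero_mem' := by simp [hs.1]
  smul_mem' c z hz := by
    show f ((c : ℝ) • z.1) ≤ ((c : ℝ) * z.2 : ℝ)
    rw [hs.2.2 c c.2 z.1 (hz.trans_lt (EReal.coe_lt_top _)), EReal.coe_mul]
    exact mul_le_mul_of_nonneg_left hz (EReal.coe_nonneg.2 c.2)
  isClosed' := hl.isClosed_epigraph.preimage
    (continuous_fst.prodMk (continuous_coe_real_ereal.comp continuous_snd))

section Representation

variable {f : X → EReal}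

lemma exists_separation_epigraph (hl : LowerSemicontinuous f) (hs : ESublinear f) {x₀ : X}
    {r : ℝ} (hr : (r : EReal) < f x₀) : ∃ (p : WeakDual ℝ X) (s : ℝ),
      p x₀ + r * s < 0 ∧ ∀ x (t : ℝ), f x ≤ t → 0 ≤ p x + t * s := by
  obtain ⟨φ, hφC, hφ⟩ :=
    (epigraphCone f hl hs).hyperplane_separation_point (x₀ := (x₀, r)) hr.not_ge
  have hφ_apply : ∀ x t, φ (x, t) = φ.comp (.inl ℝ X ℝ) x + t * φ (0, 1) := fun x t => by
    rw [← φ.comp_inl_add_comp_inr (x, t)]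
    simpa using φ.map_smul t ((0 : X), (1 : ℝ))
  refine ⟨φ.comp (.inl ℝ X ℝ), φ (0, 1), hφ_apply x₀ r ▸ hφ, fun x t hxt => ?_⟩
  exact hφ_apply x t ▸ hφC (x, t) hxt

lemma neg_inv_smul_mem_subdiff_zero (hbot : ∀ x, f x ≠ ⊥) (hf0 : f 0 = 0) {p : WeakDual ℝ X}
    {s : ℝ} (hs : 0 < s) (hp : ∀ x (t : ℝ), f x ≤ t → 0 ≤ p x + t * s) :
    (-s⁻¹) • p ∈ subdiff f 0 :=
  mem_subdiff_zero_of_forall_coe hf0 hbot fun x c hc => by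
    have := hp x c hc.le
    show -s⁻¹ * p x ≤ c
    rw [neg_mul, ← div_eq_inv_mul, neg_le, le_div_iff₀ hs]
    linarith

lemma subdiff_zero_nonempty (hbot : ∀ x, f x ≠ ⊥) (hl : LowerSemicontinuous f)
    (hs : ESublinear f) : (subdiff f 0).Nonempty := by
  obtain ⟨p, s, h0, hp⟩ :=
    exists_separation_epigraph hl hs (x₀ := 0) (r := -1) (by rw [hs.1]; norm_num)
  exact ⟨_, neg_inv_smul_mem_subdiff_zero hbot hs.1 (by simpa using h0) hp⟩

lemma sub_smul_mem_subdiff_zero (hbot : ∀ x, f x ≠ ⊥) (hf0 : f 0 = 0) {q : WeakDual ℝ X}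
    (hq : q ∈ subdiff f 0) {p : WeakDual ℝ X} (hp : ∀ x (t : ℝ), f x ≤ t → 0 ≤ p x) {n : ℝ}
    (hn : 0 ≤ n) : q - n • p ∈ subdiff f 0 :=
  mem_subdiff_zero_of_forall_coe hf0 hbot fun x c hc => by
    have hqx : q x ≤ c := EReal.coe_le_coe_iff.1 (hc ▸ (mem_subdiff_zero hf0).1 hq x)
    show q x - n * p x ≤ c
    nlinarith [hp x c hc.le]

lemma exists_mem_subdiff_zero_lt (hbot : ∀ x, f x ≠ ⊥) (hl : LowerSemicontinuous f)
    (hs : ESublinear f) {x₀ : X} {r : ℝ} (hr : (r : EReal) < f x₀) :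
    ∃ q ∈ subdiff f 0, r < q x₀ := by
  obtain ⟨p, s, hx₀, hp⟩ := exists_separation_epigraph hl hs hr
  have hs_nonneg : 0 ≤ s := by simpa [hs.1] using hp 0 1 (by simp [hs.1])
  obtain rfl | hspos := hs_nonneg.eq_or_lt
  · -- the separating hyperplane is vertical: move a subgradient along `-p`
    obtain ⟨q, hq⟩ := subdiff_zero_nonempty hbot hl hs
    have hpx₀ : 0 < -p x₀ := by simpa using hx₀
    obtain ⟨n, hn⟩ := exists_nat_gt ((r - q x₀) / -p x₀)
    refine ⟨q - (n : ℝ) • p, sub_smul_mem_subdiff_zero hbot hs.1 hq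
      (fun x t hxt => by simpa using hp x t hxt) n.cast_nonneg, ?_⟩
    show r < q x₀ - n * p x₀
    rw [div_lt_iff₀ hpx₀] at hn
    linarith
  · refine ⟨_, neg_inv_smul_mem_subdiff_zero hbot hs.1 hspos hp, ?_⟩
    show r < -s⁻¹ * p x₀
    rw [neg_mul, ← div_eq_inv_mul, lt_neg, div_lt_iff₀ hspos]
    linarith

end Representation

def supportFun (A : Set (WeakDual ℝ X)) (x : X) : EReal := ⨆ q ∈ A, (q x : EReal)

lemma le_supportFun {A : Set (WeakDual ℝ X)} {q : WeakDual ℝ X} (hq : q ∈ A) (x : X) :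
    (q x : EReal) ≤ supportFun A x :=
  le_iSup₂ (f := fun q (_ : q ∈ A) => (q x : EReal)) q hq

lemma supportFun_add (A B : Set (WeakDual ℝ X)) (x : X) :
    supportFun (A + B) x = supportFun A x + supportFun B x := by
  refine le_antisymm (iSup₂_le ?_) (EReal.add_le_of_forall_lt fun a' ha' b' hb' => ?_)
  · rintro _ ⟨a, ha, b, hb, rfl⟩
    exact (EReal.coe_add _ _).trans_le (add_le_add (le_supportFun ha x) (le_supportFun hb x))
  · obtain ⟨a, ha, hax⟩ := lt_biSup_iff.1 ha'
    obtain ⟨b, hb, hbx⟩ := lt_biSup_iff.1 hb'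
    calc a' + b' ≤ ((a x + b x : ℝ) : EReal) :=
          (add_le_add hax.le hbx.le).trans_eq (EReal.coe_add _ _).symm
      _ ≤ supportFun (A + B) x := le_supportFun (Set.add_mem_add ha hb) x

lemma supportFun_sum {ι : Type*} (s : Finset ι) (A : ι → Set (WeakDual ℝ X)) (x : X) :
    supportFun (∑ i ∈ s, A i) x = ∑ i ∈ s, supportFun (A i) x := by
  induction s using Finset.cons_induction with
  | empty => simp only [supportFun, Finset.sum_empty, mem_zero, iSup_iSup_eq_left]; rfl
  | cons i s hi ih => rw [Finset.sum_cons, Finset.sum_cons, supportFun_add, ih]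

lemma supportFun_subdiff_zero {f : X → EReal} (hbot : ∀ x, f x ≠ ⊥)
    (hl : LowerSemicontinuous f) (hs : ESublinear f) : supportFun (subdiff f 0) = f := by
  funext x
  refine le_antisymm (iSup₂_le fun q hq => (mem_subdiff_zero hs.1).1 hq x) ?_
  refine le_of_forall_lt fun c hc => ?_
  obtain ⟨r, hcr, hr⟩ := EReal.lt_iff_exists_real_btwn.1 hc
  obtain ⟨q, hq, hrq⟩ := exists_mem_subdiff_zero_lt hbot hl hs hr
  exact hcr.trans ((EReal.coe_lt_coe_iff.2 hrq).trans_le (le_supportFun hq x))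

-- not found by instance search through the type synonym `WeakDual`
instance : LocallyConvexSpace ℝ (WeakDual ℝ X) := WeakBilin.locallyConvexSpace

lemma setOf_forall_le_supportFun {A : Set (WeakDual ℝ X)} (hconv : Convex ℝ A)
    (hcl : IsClosed A) : {q | ∀ x, (q x : EReal) ≤ supportFun A x} = A := by
  refine Subset.antisymm (fun q hq => ?_) fun q hq => le_supportFun hq
  by_contra hqA
  obtain ⟨φ, u, hA, hu⟩ := geometric_hahn_banach_closed_point hconv hcl hqA
  -- weak* continuous functionals are evaluations
  obtain ⟨x, rfl⟩ := LinearMap.dualEmbedding_surjective (topDualPairing ℝ X) φ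
  have hσ : supportFun A x ≤ u := iSup₂_le fun a ha => EReal.coe_le_coe_iff.2 (hA a ha).le
  exact (hq x).not_gt (hσ.trans_lt (EReal.coe_lt_coe_iff.2 hu))

theorem stmt11_general {X : Type*} [NormedAddCommGroup X] [NormedSpace ℝ X]
    {m : ℕ} (f : Fin m → X → EReal)
    (hp : ∀ i, EProper (f i)) (hl : ∀ i, LowerSemicontinuous (f i))
    (hs : ∀ i, ESublinear (f i)) :
    IsClosed (∑ i, subdiff (f i) 0) ↔
      ∀ p : WeakDual ℝ X, fconj (fun x => ∑ i, f i x) p = infConv (fun i => fconj (f i)) p := by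
  have hsum : ESublinear fun x => ∑ i, f i x := ESublinear.sum _ (fun i => (hp i).1) hs
  have hconj : (fun i => fconj (f i)) = fun i => convexIndicator (subdiff (f i) 0) :=
    funext fun i => fconj_eq_convexIndicator (hs i)
  rw [← funext_iff, hconj, infConv_convexIndicator, fconj_eq_convexIndicator hsum,
    convexIndicator_injective.eq_iff]
  refine ⟨fun hcl => ?_, fun h => h ▸ isClosed_subdiff_zero hsum.1⟩
  have hσ : supportFun (∑ i, subdiff (f i) 0) = fun x => ∑ i, f i x := funext fun x => by
    rw [supportFun_sum]
    exact Finset.sum_congr rfl fun i _ =>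
      congrFun (supportFun_subdiff_zero (hp i).1 (hl i) (hs i)) x
  have hconv : Convex ℝ (∑ i, subdiff (f i) 0) :=
    convex_sum _ fun i _ => convex_subdiff_zero (hs i).1 (hp i).1
  rw [← setOf_forall_le_supportFun hconv hcl, hσ]
  ext q
  exact mem_subdiff_zero hsum.1

theorem stmt11 {X : Type*} [NormedAddCommGroup X] [NormedSpace ℝ X] [CompleteSpace X]
    {m : ℕ} (hm : 1 ≤ m) (f : Fin m → X → EReal)
    (hp : ∀ i, EProper (f i)) (hl : ∀ i, LowerSemicontinuous (f i))
    (hs : ∀ i, ESublinear (f i)) :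
    IsClosed (∑ i, subdiff (f i) 0) ↔
      ∀ p : WeakDual ℝ X, fconj (fun x => ∑ i, f i x) p = infConv (fun i => fconj (f i)) p :=
  stmt11_general f hp hl hs
end
end

section
/- Let f, g : X → (-∞, +∞] be proper lower semicontinuous sublinear functions on a real Banach space X. Then the following are equivalent: (a) epi f* + epi g* is weak*×ℝ closed; (b) (f+g)* = f* □ g* and the infimal convolution is exact everywhere; (c) ∂(f+g)(x) = ∂f(x) + ∂g(x) for all x ∈ X. -/
open Pointwise Topology Set

noncomputable section

variable {X : Type*} [NormedAddCommGroup X] [NormedSpace ℝ X]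

/-!
For a proper sublinear `f`, the conjugate `f*` is the indicator function of the weak*-closed convex
set `∂f(0)` of continuous linear minorants of `f`. Hence `epi f* = ∂f(0) × [0, ∞)`, the infimal
convolution `f* □ g*` is the indicator function of `∂f(0) + ∂g(0)` and is exact everywhere, and
`∂f(x) = {p ∈ ∂f(0) | p x = f x}`. So each of (a), (b), (c) amounts to
`∂(f + g)(0) = ∂f(0) + ∂g(0)`, whose inclusion `⊇` is trivial. For (a) it remains to see that
`∂(f + g)(0)` lies in the weak* closure of `∂f(0) + ∂g(0)`. Otherwise a weak*-continuous
functional, that is a point `w ∈ X`, separates the two, which contradicts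
`f w = sup {p w | p ∈ ∂f(0)}`: a lower semicontinuous sublinear function is the supremum of its
linear minorants, by Hahn–Banach applied to its closed epigraph cone.
-/

set_option linter.unusedSectionVars false

variable {f g : X → EReal}

/-- For sublinear `f` this is `∂f(0)`, and `fconj f` is its indicator function. -/
def linearMinorants (f : X → EReal) : Set (WeakDual ℝ X) := {p | ∀ x, (p x : EReal) ≤ f x}

lemma mem_linearMinorants_of_forall_le {p : WeakDual ℝ X}
    (h : ∀ z (a : ℝ), f z ≤ a → p z ≤ a) : p ∈ linearMinorants f := fun z =>
  EReal.le_of_forall_lt_iff_le.1 fun a ha => EReal.coe_le_coe_iff.2 (h z a ha.le)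

lemma linearMinorants_eq_iInter (f : X → EReal) :
    linearMinorants f = ⋂ x, ⋂ (a : ℝ) (_ : f x < a), {p : WeakDual ℝ X | p x ≤ a} := by
  ext p
  simp only [mem_iInter, mem_ofPred_eq]
  refine forall_congr' fun x => ?_
  rw [← EReal.le_of_forall_lt_iff_le]
  simp only [EReal.coe_le_coe_iff]

lemma isClosed_linearMinorants (f : X → EReal) : IsClosed (linearMinorants f) := by
  rw [linearMinorants_eq_iInter]
  exact isClosed_iInter fun x => isClosed_biInter fun a _ =>
    isClosed_le (WeakDual.eval_continuous x) continuous_const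

lemma convex_linearMinorants (f : X → EReal) : Convex ℝ (linearMinorants f) := by
  rw [linearMinorants_eq_iInter]
  exact convex_iInter fun x => convex_iInter₂ fun a _ =>
    convex_halfSpace_le ⟨fun _ _ => rfl, fun _ _ => rfl⟩ a

lemma linearMinorants_add_subset :
    linearMinorants f + linearMinorants g ⊆ linearMinorants (fun x => f x + g x) := by
  rintro _ ⟨p, hp, q, hq, rfl⟩ x
  exact add_le_add (hp x) (hq x)

lemma exists_mem_linearMinorants_lt_of_pos {L : StrongDual ℝ X} {β : ℝ} (hβ : 0 < β)
    (hL : ∀ z (a : ℝ), f z ≤ a → 0 ≤ L z + β * a) {x : X} {r : ℝ} (hx : L x + β * r < 0) :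
    ∃ p ∈ linearMinorants f, r < p x := by
  refine ⟨StrongDual.toWeakDual (-β⁻¹ • L), mem_linearMinorants_of_forall_le fun z a hza => ?_, ?_⟩
  · have := hL z a hza
    simp only [StrongDual.coe_toWeakDual, smul_apply, smul_eq_mul]
    rw [neg_mul, neg_le, le_inv_mul_iff₀ hβ]
    linarith
  · simp only [StrongDual.coe_toWeakDual, smul_apply, smul_eq_mul]
    rw [neg_mul, lt_neg, inv_mul_lt_iff₀ hβ]
    linarith

lemma EProper.exists_eq_coe (hf : EProper f) {x : X} (hx : x ∈ edom f) : ∃ c : ℝ, f x = c :=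
  ⟨_, (EReal.coe_toReal hx.ne (hf.1 x)).symm⟩

lemma mem_edom_add (hf : EProper f) (hg : EProper g) {x : X} :
    x ∈ edom (fun x => f x + g x) ↔ x ∈ edom f ∧ x ∈ edom g := by
  simp only [edom, mem_ofPred_eq, lt_top_iff_ne_top]
  exact EReal.add_ne_top_iff_ne_top₂ (hf.1 x) (hg.1 x)

lemma EProper.add (hf : EProper f) (hg : EProper g) (hf0 : f 0 = 0) (hg0 : g 0 = 0) :
    EProper (fun x => f x + g x) :=
  ⟨fun x => EReal.add_ne_bot_iff.2 ⟨hf.1 x, hg.1 x⟩, 0, by simp [hf0, hg0]⟩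

lemma EReal.coe_add_coe_eq_add_iff {a c : ℝ} {b d : EReal} (hab : (a : EReal) ≤ b)
    (hcd : (c : EReal) ≤ d) : (a : EReal) + c = b + d ↔ a = b ∧ c = d := by
  refine ⟨fun h => ?_, fun h => by rw [h.1, h.2]⟩
  have hb : b ≠ ⊥ := ne_bot_of_le_ne_bot (EReal.coe_ne_bot a) hab
  have hd : d ≠ ⊥ := ne_bot_of_le_ne_bot (EReal.coe_ne_bot c) hcd
  obtain ⟨hbt, hdt⟩ := (EReal.add_ne_top_iff_ne_top₂ hb hd).1 (h ▸ EReal.coe_ne_top _)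
  lift b to ℝ using ⟨hbt, hb⟩
  lift d to ℝ using ⟨hdt, hd⟩
  norm_cast at h hab hcd ⊢
  constructor <;> linarith

instance inst_s13 : LocallyConvexSpace ℝ (WeakDual ℝ X) := WeakBilin.locallyConvexSpace

namespace ESublinear

lemma map_smul_of_eq_coe (hfs : ESublinear f) {x : X} {c : ℝ} (hx : f x = c) {t : ℝ}
    (ht : 0 ≤ t) : f (t • x) = ((t * c : ℝ) : EReal) := by
  rw [hfs.2.2 t ht x (by simp [edom, hx]), hx, EReal.coe_mul]

lemma add (hf : EProper f) (hg : EProper g) (hfs : ESublinear f) (hgs : ESublinear g) :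
    ESublinear (fun x => f x + g x) := by
  refine ⟨by simp [hfs.1, hgs.1], fun x hx y hy => ?_, fun t ht x hx => ?_⟩
  · rw [mem_edom_add hf hg] at hx hy
    calc f (x + y) + g (x + y) ≤ (f x + f y) + (g x + g y) :=
          add_le_add (hfs.2.1 x hx.1 y hy.1) (hgs.2.1 x hx.2 y hy.2)
      _ = (f x + g x) + (f y + g y) := add_add_add_comm _ _ _ _
  · obtain ⟨hxf, hxg⟩ := (mem_edom_add hf hg).1 hx
    obtain ⟨a, ha⟩ := hf.exists_eq_coe hxf
    obtain ⟨b, hb⟩ := hg.exists_eq_coe hxg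
    simp only [hfs.map_smul_of_eq_coe ha ht, hgs.map_smul_of_eq_coe hb ht, ha, hb,
      ← EReal.coe_add, ← EReal.coe_mul, mul_add]

def epigraphCone (hfl : LowerSemicontinuous f) (hfs : ESublinear f) : ProperCone ℝ (X × ℝ) where
  carrier := {q | f q.1 ≤ q.2}
  add_mem' {q r} hq hr := by
    calc f (q.1 + r.1) ≤ f q.1 + f r.1 :=
          hfs.2.1 _ (hq.trans_lt (EReal.coe_lt_top _)) _ (hr.trans_lt (EReal.coe_lt_top _))
      _ ≤ q.2 + r.2 := add_le_add hq hr
  zero_mem' := by simp [hfs.1]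
  smul_mem' c q hq := by
    change f ((c : ℝ) • q.1) ≤ ((c : ℝ) * q.2 : ℝ)
    rw [hfs.2.2 c c.2 q.1 (hq.trans_lt (EReal.coe_lt_top _)), EReal.coe_mul]
    exact mul_le_mul_of_nonneg_left hq (EReal.coe_nonneg.2 c.2)
  isClosed' := hfl.isClosed_epigraph.preimage
    (continuous_fst.prodMk (continuous_coe_real_ereal.comp continuous_snd))

lemma exists_separating_of_lt (hfl : LowerSemicontinuous f) (hfs : ESublinear f) {x : X}
    {r : ℝ} (hr : (r : EReal) < f x) :
    ∃ (L : StrongDual ℝ X) (β : ℝ), 0 ≤ β ∧ (∀ z (a : ℝ), f z ≤ a → 0 ≤ L z + β * a) ∧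
      L x + β * r < 0 := by
  obtain ⟨φ, hφC, hφx⟩ :=
    (epigraphCone hfl hfs).hyperplane_separation_point (x₀ := (x, r)) hr.not_ge
  have hφ : ∀ z a, φ (z, a) = φ.comp (.inl ℝ X ℝ) z + φ (0, 1) * a := fun z a => by
    rw [mul_comm, ← smul_eq_mul, ← map_smul, ContinuousLinearMap.comp_apply,
      ContinuousLinearMap.inl_apply, ← map_add, Prod.smul_mk, smul_zero, smul_eq_mul, mul_one,
      Prod.mk_add_mk, add_zero, zero_add]
  refine ⟨φ.comp (.inl ℝ X ℝ), φ (0, 1), ?_, fun z a hza => ?_, ?_⟩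
  · exact hφC (0, 1) (show f 0 ≤ (1 : ℝ) by simp [hfs.1])
  · exact hφ z a ▸ hφC (z, a) hza
  · exact hφ x r ▸ hφx

lemma linearMinorants_nonempty (hfl : LowerSemicontinuous f) (hfs : ESublinear f) :
    (linearMinorants f).Nonempty := by
  obtain ⟨L, β, -, hL, h0⟩ := exists_separating_of_lt hfl hfs (x := 0) (r := -1) (by simp [hfs.1])
  have hβ : 0 < β := by simpa using h0
  obtain ⟨p, hp, -⟩ := exists_mem_linearMinorants_lt_of_pos hβ hL h0
  exact ⟨p, hp⟩

lemma exists_mem_linearMinorants_lt (hfl : LowerSemicontinuous f) (hfs : ESublinear f) {x : X}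
    {r : ℝ} (hr : (r : EReal) < f x) : ∃ p ∈ linearMinorants f, r < p x := by
  obtain ⟨L, β, hβ, hL, hx⟩ := exists_separating_of_lt hfl hfs hr
  rcases hβ.lt_or_eq with hβ | rfl
  · exact exists_mem_linearMinorants_lt_of_pos hβ hL hx
  -- The separating hyperplane is vertical: tilt some minorant `p₀` along `-L`.
  obtain ⟨p₀, hp₀⟩ := linearMinorants_nonempty hfl hfs
  simp only [zero_mul, add_zero] at hL hx
  obtain ⟨n, hn⟩ := exists_nat_gt ((r - p₀ x) / -L x)
  refine ⟨p₀ - StrongDual.toWeakDual (n • L),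
    mem_linearMinorants_of_forall_le fun z a hza => ?_, ?_⟩
  · have h₀ : p₀ z ≤ a := EReal.coe_le_coe_iff.1 ((hp₀ z).trans hza)
    have := hL z a hza
    change p₀ z - (n • L) z ≤ a
    rw [smul_apply, nsmul_eq_mul]
    nlinarith [n.cast_nonneg (α := ℝ)]
  · have hLx : 0 < -L x := by linarith
    change r < p₀ x - (n • L) x
    rw [smul_apply, nsmul_eq_mul]
    rw [div_lt_iff₀ hLx] at hn
    linarith

lemma biSup_linearMinorants_apply (hfl : LowerSemicontinuous f) (hfs : ESublinear f) (x : X) :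
    ⨆ p ∈ linearMinorants f, (p x : EReal) = f x := by
  refine le_antisymm (iSup₂_le fun p hp => hp x) (EReal.ge_of_forall_gt_iff_ge.1 fun r hr => ?_)
  obtain ⟨p, hp, hrp⟩ := exists_mem_linearMinorants_lt hfl hfs hr
  exact le_iSup₂_of_le p hp (EReal.coe_le_coe_iff.2 hrp.le)

lemma linearMinorants_add_subset_closure (hfl : LowerSemicontinuous f)
    (hgl : LowerSemicontinuous g) (hfs : ESublinear f) (hgs : ESublinear g) :
    linearMinorants (fun x => f x + g x) ⊆ closure (linearMinorants f + linearMinorants g) := by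
  intro p hp
  by_contra hpS
  obtain ⟨φ, u, hφS, hφp⟩ := geometric_hahn_banach_closed_point
    ((convex_linearMinorants f).add (convex_linearMinorants g)).closure isClosed_closure hpS
  -- Every weak*-continuous functional on the dual is evaluation at a point of `X`.
  obtain ⟨w, rfl⟩ := LinearMap.dualEmbedding_surjective (topDualPairing ℝ X) φ
  have hfgw : f w + g w ≤ u := by
    refine EReal.add_le_of_forall_lt fun a ha b hb => ?_
    rw [← biSup_linearMinorants_apply hfl hfs] at ha
    rw [← biSup_linearMinorants_apply hgl hgs] at hb
    obtain ⟨q₁, hq₁, ha⟩ := lt_biSup_iff.1 ha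
    obtain ⟨q₂, hq₂, hb⟩ := lt_biSup_iff.1 hb
    calc a + b ≤ q₁ w + q₂ w := add_le_add ha.le hb.le
      _ ≤ u := EReal.coe_le_coe_iff.2 (hφS _ (subset_closure (add_mem_add hq₁ hq₂))).le
  exact (hfgw.trans_lt (EReal.coe_lt_coe_iff.2 hφp)).not_ge (hp w)

open Classical in
lemma fconj_eq_ite (hf : EProper f) (hfs : ESublinear f) (p : WeakDual ℝ X) :
    fconj f p = if p ∈ linearMinorants f then (0 : EReal) else ⊤ := by
  split_ifs with hp
  · exact le_antisymm (iSup_le fun x => EReal.sub_nonpos.2 (hp x))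
      (le_iSup_of_le 0 (by simp [hfs.1]))
  obtain ⟨x, hx⟩ : ∃ x, f x < p x := by simpa [linearMinorants] using hp
  obtain ⟨c, hc⟩ := hf.exists_eq_coe (hx.trans (EReal.coe_lt_top _))
  have hcx : 0 < p x - c := sub_pos.2 (EReal.coe_lt_coe_iff.1 (hc ▸ hx))
  -- Along the ray through `x` the gap `p - f` grows linearly.
  refine (EReal.eq_top_iff_forall_lt _).2 fun r => ?_
  obtain ⟨n, hn⟩ := exists_nat_gt (r / (p x - c))
  calc (r : EReal) < ((n * (p x - c) : ℝ) : EReal) :=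
        EReal.coe_lt_coe_iff.2 ((div_lt_iff₀ hcx).1 hn)
    _ = p ((n : ℝ) • x) - f ((n : ℝ) • x) := by
        rw [map_smul_of_eq_coe hfs hc n.cast_nonneg, map_smul, smul_eq_mul, ← EReal.coe_sub,
          mul_sub]
    _ ≤ fconj f p := le_iSup (fun y => (p y : EReal) - f y) _

open Classical in
lemma iInf_fconj_add_fconj_sub (hf : EProper f) (hg : EProper g) (hfs : ESublinear f)
    (hgs : ESublinear g) (p : WeakDual ℝ X) :
    ⨅ q, fconj f q + fconj g (p - q) =
      if p ∈ linearMinorants f + linearMinorants g then (0 : EReal) else ⊤ := by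
  simp only [fconj_eq_ite hf hfs, fconj_eq_ite hg hgs]
  split_ifs with hp
  · obtain ⟨q, hq, r, hr, rfl⟩ := hp
    refine le_antisymm (iInf_le_of_le q (by simp [hq, hr])) (le_iInf fun _ => ?_)
    split_ifs <;> simp
  · refine iInf_eq_top.2 fun q => ?_
    split_ifs with hq hpq
    · exact absurd ⟨q, hq, p - q, hpq, add_sub_cancel q p⟩ hp
    all_goals simp

lemma exists_fconj_add_fconj_sub_eq_iInf (hf : EProper f) (hg : EProper g)
    (hfs : ESublinear f) (hgs : ESublinear g) (p : WeakDual ℝ X) :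
    ∃ q, ⨅ q', fconj f q' + fconj g (p - q') = fconj f q + fconj g (p - q) := by
  have h := iInf_fconj_add_fconj_sub hf hg hfs hgs p
  split_ifs at h with hp
  · obtain ⟨q, hq, r, hr, rfl⟩ := hp
    refine ⟨q, ?_⟩
    rw [h, add_sub_cancel_left]
    simp [fconj_eq_ite hf hfs, fconj_eq_ite hg hgs, hq, hr]
  · exact ⟨0, h.trans (iInf_eq_top.1 h 0).symm⟩

lemma fconj_add_eq_iInf_iff (hf : EProper f) (hg : EProper g) (hfs : ESublinear f)
    (hgs : ESublinear g) :
    (∀ p, fconj (fun x => f x + g x) p = ⨅ q, fconj f q + fconj g (p - q)) ↔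
      linearMinorants (fun x => f x + g x) = linearMinorants f + linearMinorants g := by
  simp only [fconj_eq_ite (hf.add hg hfs.1 hgs.1) (hfs.add hf hg hgs),
    iInf_fconj_add_fconj_sub hf hg hfs hgs, Set.ext_iff]
  refine forall_congr' fun p => ?_
  split_ifs <;> simp_all

lemma epiConj_eq (hf : EProper f) (hfs : ESublinear f) :
    epiConj f = linearMinorants f ×ˢ Ici 0 := by
  ext ⟨p, a⟩
  simp only [epiConj, mem_ofPred_eq, fconj_eq_ite hf hfs, mem_prod, mem_Ici]
  split_ifs <;> simp_all

lemma epiConj_add_epiConj (hf : EProper f) (hg : EProper g) (hfs : ESublinear f)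
    (hgs : ESublinear g) :
    epiConj f + epiConj g = (linearMinorants f + linearMinorants g) ×ˢ Ici 0 := by
  have hIci : Ici (0 : ℝ) + Ici 0 = Ici 0 := subset_antisymm
    (by simpa using Set.Ici_add_Ici_subset (0 : ℝ) 0) (subset_add_left _ self_mem_Ici)
  rw [epiConj_eq hf hfs, epiConj_eq hg hgs, prod_add_prod_comm, hIci]

lemma isClosed_epiConj_add_epiConj_iff (hf : EProper f) (hg : EProper g)
    (hfl : LowerSemicontinuous f) (hgl : LowerSemicontinuous g) (hfs : ESublinear f)
    (hgs : ESublinear g) :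
    IsClosed (epiConj f + epiConj g) ↔
      linearMinorants (fun x => f x + g x) = linearMinorants f + linearMinorants g := by
  rw [epiConj_add_epiConj hf hg hfs hgs]
  constructor
  · intro h
    have hS : IsClosed (linearMinorants f + linearMinorants g) := by
      simpa using h.preimage (continuous_id.prodMk continuous_const :
        Continuous fun p => (p, (0 : ℝ)))
    exact ((linearMinorants_add_subset_closure hfl hgl hfs hgs).trans hS.closure_eq.subset).antisymm
      linearMinorants_add_subset
  · intro h
    exact h ▸ (isClosed_linearMinorants _).prod isClosed_Ici

lemma subdiff_eq (hfs : ESublinear f) (x : X) :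
    subdiff f x = {p ∈ linearMinorants f | (p x : EReal) = f x} := by
  ext p
  constructor
  · rintro ⟨hxt, hxb, h⟩
    obtain ⟨c, hc⟩ : ∃ c : ℝ, f x = c := ⟨_, (EReal.coe_toReal hxt hxb).symm⟩
    simp only [hc, EReal.coe_zero, add_zero, ← EReal.coe_add] at h
    -- Testing at `y = 0` and `y = 2 • x` pins down `p x = f x`.
    have h0 : p (0 - x) + c ≤ 0 := by exact_mod_cast hfs.1 ▸ h 0
    have h2 : p ((2 : ℝ) • x - x) + c ≤ 2 * c := by
      exact_mod_cast hfs.map_smul_of_eq_coe hc zero_le_two ▸ h ((2 : ℝ) • x)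
    rw [zero_sub, map_neg] at h0
    rw [two_smul, add_sub_cancel_right] at h2
    have hpx : p x = c := by linarith
    refine ⟨fun y => ?_, by rw [hc, hpx]⟩
    simpa [hpx] using h y
  · rintro ⟨hp, hpx⟩
    refine ⟨hpx ▸ EReal.coe_ne_top _, hpx ▸ EReal.coe_ne_bot _, fun y => ?_⟩
    rw [← hpx, ← EReal.coe_add, map_sub, sub_add_cancel, EReal.coe_zero, add_zero]
    exact hp y

lemma subdiff_zero (hfs : ESublinear f) : subdiff f 0 = linearMinorants f := by
  simp [hfs.subdiff_eq, hfs.1]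

lemma subdiff_add_eq (hf : EProper f) (hg : EProper g) (hfs : ESublinear f)
    (hgs : ESublinear g)
    (h : linearMinorants (fun x => f x + g x) = linearMinorants f + linearMinorants g) (x : X) :
    subdiff (fun y => f y + g y) x = subdiff f x + subdiff g x := by
  rw [(hfs.add hf hg hgs).subdiff_eq, hfs.subdiff_eq, hgs.subdiff_eq, h]
  ext p
  constructor
  · rintro ⟨⟨p₁, hp₁, p₂, hp₂, rfl⟩, hx⟩
    have := (EReal.coe_add_coe_eq_add_iff (hp₁ x) (hp₂ x)).1 hx
    exact add_mem_add ⟨hp₁, this.1⟩ ⟨hp₂, this.2⟩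
  · rintro ⟨p₁, ⟨hp₁, h₁⟩, p₂, ⟨hp₂, h₂⟩, rfl⟩
    exact ⟨add_mem_add hp₁ hp₂, by rw [← h₁, ← h₂]; rfl⟩

lemma subdiff_add_eq_iff (hf : EProper f) (hg : EProper g) (hfs : ESublinear f)
    (hgs : ESublinear g) :
    (∀ x, subdiff (fun y => f y + g y) x = subdiff f x + subdiff g x) ↔
      linearMinorants (fun x => f x + g x) = linearMinorants f + linearMinorants g := by
  refine ⟨fun h => ?_, subdiff_add_eq hf hg hfs hgs⟩
  simpa only [(hfs.add hf hg hgs).subdiff_zero, hfs.subdiff_zero, hgs.subdiff_zero] using h 0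

end ESublinear

theorem stmt13_general {X : Type*} [NormedAddCommGroup X] [NormedSpace ℝ X]
    (f g : X → EReal) (hf : EProper f) (hg : EProper g)
    (hfl : LowerSemicontinuous f) (hgl : LowerSemicontinuous g)
    (hfs : ESublinear f) (hgs : ESublinear g) :
    (IsClosed (epiConj f + epiConj g) ↔
      ((∀ p : WeakDual ℝ X,
          fconj (fun x => f x + g x) p = ⨅ q : WeakDual ℝ X, fconj f q + fconj g (p - q)) ∧
       (∀ p : WeakDual ℝ X, ∃ q : WeakDual ℝ X,
          (⨅ q' : WeakDual ℝ X, fconj f q' + fconj g (p - q')) = fconj f q + fconj g (p - q)))) ∧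
    (((∀ p : WeakDual ℝ X,
          fconj (fun x => f x + g x) p = ⨅ q : WeakDual ℝ X, fconj f q + fconj g (p - q)) ∧
       (∀ p : WeakDual ℝ X, ∃ q : WeakDual ℝ X,
          (⨅ q' : WeakDual ℝ X, fconj f q' + fconj g (p - q')) = fconj f q + fconj g (p - q))) ↔
      (∀ x : X, subdiff (fun y => f y + g y) x = subdiff f x + subdiff g x)) := by
  have hexact := ESublinear.exists_fconj_add_fconj_sub_eq_iInf hf hg hfs hgs
  rw [ESublinear.isClosed_epiConj_add_epiConj_iff hf hg hfl hgl hfs hgs,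
    ESublinear.fconj_add_eq_iInf_iff hf hg hfs hgs, ESublinear.subdiff_add_eq_iff hf hg hfs hgs]
  exact ⟨⟨fun h => ⟨h, hexact⟩, And.left⟩, ⟨And.left, fun h => ⟨h, hexact⟩⟩⟩

theorem stmt13 {X : Type*} [NormedAddCommGroup X] [NormedSpace ℝ X] [CompleteSpace X]
    (f g : X → EReal) (hf : EProper f) (hg : EProper g)
    (hfl : LowerSemicontinuous f) (hgl : LowerSemicontinuous g)
    (hfs : ESublinear f) (hgs : ESublinear g) :
    (IsClosed (epiConj f + epiConj g) ↔
      ((∀ p : WeakDual ℝ X,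
          fconj (fun x => f x + g x) p = ⨅ q : WeakDual ℝ X, fconj f q + fconj g (p - q)) ∧
       (∀ p : WeakDual ℝ X, ∃ q : WeakDual ℝ X,
          (⨅ q' : WeakDual ℝ X, fconj f q' + fconj g (p - q')) = fconj f q + fconj g (p - q)))) ∧
    (((∀ p : WeakDual ℝ X,
          fconj (fun x => f x + g x) p = ⨅ q : WeakDual ℝ X, fconj f q + fconj g (p - q)) ∧
       (∀ p : WeakDual ℝ X, ∃ q : WeakDual ℝ X,
          (⨅ q' : WeakDual ℝ X, fconj f q' + fconj g (p - q')) = fconj f q + fconj g (p - q))) ↔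
      (∀ x : X, subdiff (fun y => f y + g y) x = subdiff f x + subdiff g x)) :=
  stmt13_general f g hf hg hfl hgl hfs hgs
end
end

section
/- Let H be an infinite-dimensional real Hilbert space with orthonormal sequence (e_n)_{n≥0}, let C be the closed linear span of {e_{2n}} and D the closed linear span of {cos(θ_n) e_{2n} + sin(θ_n) e_{2n+1}}, where θ_n ∈ (0, π/2] and ∑ sin²(θ_n) < ∞. Set f := ι_{C^⊥} and g := ι_{D^⊥}. Then for every x ∈ dom f ∩ dom g, ∂(f+g)(x) ≠ ⋂_{η>0} [ ∂_η f(x) + ∂_η g(x) ], since the right-hand side equals C + D, which is not closed. -/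
open Pointwise Topology Set

noncomputable section

variable {X : Type*} [NormedAddCommGroup X] [NormedSpace ℝ X]

/-!
For a subspace `K` and `x ∈ K`, an `ε`-subgradient of `ι_K` at `x` (any `ε ≥ 0`) is a linear
functional bounded above on `K`, hence zero on `K`. Through the Riesz map the `ε`-subdifferential
of `ι_{Cᗮ}` is therefore `C` and that of `ι_{Dᗮ}` is `D`, so the intersection over `η > 0` is
`C + D`; while `f + g = ι_{Cᗮ ⊓ Dᗮ}` has subdifferential `(Cᗮ ⊓ Dᗮ)ᗮ = closure (C + D)`.

`C + D` is not closed: with `w n = cos θₙ • e (2n) + sin θₙ • e (2n+1)`, the vector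
`v = ∑ sin θₙ • e (2n+1)` is the limit of `∑_{n<N} (w n - cos θₙ • e (2n)) ∈ C + D`, but
`v = c + d` with `c ∈ C`, `d ∈ D` forces `⟪w n, d⟫ = 1` for every `n`, against Bessel's inequality.
-/

section SubspaceIndicator

open scoped Classical in
def subspaceIndicator (K : Submodule ℝ X) : X → EReal := fun x => if x ∈ K then 0 else ⊤

variable {K L : Submodule ℝ X} {x : X}

lemma subspaceIndicator_of_mem (hx : x ∈ K) : subspaceIndicator K x = 0 := if_pos hx

lemma subspaceIndicator_of_notMem (hx : x ∉ K) : subspaceIndicator K x = ⊤ := if_neg hx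

lemma mem_edom_subspaceIndicator : x ∈ edom (subspaceIndicator K) ↔ x ∈ K := by
  by_cases hx : x ∈ K <;> simp [edom, subspaceIndicator, hx]

lemma subspaceIndicator_add_subspaceIndicator :
    (fun y => subspaceIndicator K y + subspaceIndicator L y) = subspaceIndicator (K ⊓ L) := by
  funext y
  by_cases hK : y ∈ K <;> by_cases hL : y ∈ L <;> simp [subspaceIndicator, hK, hL]

lemma map_eq_zero_of_forall_mem_le {F : Type*} [FunLike F X ℝ] [LinearMapClass F ℝ X ℝ]
    (p : F) {η : ℝ} (h : ∀ z ∈ K, p z ≤ η) {z : X} (hz : z ∈ K) : p z = 0 := by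
  by_contra hne
  have := h (((η + 1) / p z) • z) (K.smul_mem _ hz)
  rw [map_smul, smul_eq_mul, div_mul_cancel₀ _ hne] at this
  linarith

lemma epsSubdiff_subspaceIndicator (hx : x ∈ K) {η : ℝ} (hη : 0 ≤ η) :
    epsSubdiff (subspaceIndicator K) η x = {p | ∀ z ∈ K, p z = 0} := by
  ext p
  simp only [epsSubdiff, subspaceIndicator_of_mem hx, Set.mem_ofPred_eq, add_zero]
  constructor
  · rintro ⟨-, -, hp⟩ z hz
    refine map_eq_zero_of_forall_mem_le p (η := η) (fun z hz => ?_) hz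
    have := hp (z + x)
    rwa [subspaceIndicator_of_mem (K.add_mem hz hx), add_sub_cancel_right, zero_add,
      EReal.coe_le_coe_iff] at this
  · refine fun hp => ⟨EReal.zero_ne_top, EReal.zero_ne_bot, fun y => ?_⟩
    by_cases hy : y ∈ K
    · rw [hp _ (K.sub_mem hy hx), subspaceIndicator_of_mem hy, zero_add]
      exact_mod_cast hη
    · rw [subspaceIndicator_of_notMem hy, EReal.top_add_coe]
      exact le_top

end SubspaceIndicator

section Riesz

variable {H : Type*} [NormedAddCommGroup H] [InnerProductSpace ℝ H] [CompleteSpace H]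

def riesz : H ≃+ WeakDual ℝ H :=
  (InnerProductSpace.toDual ℝ H).toLinearEquiv.toAddEquiv.trans StrongDual.toWeakDual.toAddEquiv

lemma riesz_apply (v y : H) : riesz v y = inner ℝ v y := InnerProductSpace.toDual_apply_apply

lemma image_riesz (S : Set H) : riesz '' S = {p | ∃ v ∈ S, ∀ y, p y = inner ℝ v y} := by
  ext p
  constructor
  · rintro ⟨v, hv, rfl⟩
    exact ⟨v, hv, riesz_apply v⟩
  · rintro ⟨v, hv, hp⟩
    exact ⟨v, hv, DFunLike.ext _ _ fun y => (riesz_apply v y).trans (hp y).symm⟩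

lemma annihilator_eq_image_riesz_orthogonal (K : Submodule ℝ H) :
    {p : WeakDual ℝ H | ∀ z ∈ K, p z = 0} = riesz '' Kᗮ := by
  ext p
  obtain ⟨v, rfl⟩ := riesz.surjective p
  simp [riesz.injective.mem_set_image, riesz_apply, Submodule.mem_orthogonal']

variable {S T : Submodule ℝ H} {x : H}

lemma epsSubdiff_subspaceIndicator_orthogonal (hS : IsClosed (S : Set H)) (hx : x ∈ Sᗮ)
    {η : ℝ} (hη : 0 ≤ η) : epsSubdiff (subspaceIndicator Sᗮ) η x = riesz '' S := by
  rw [epsSubdiff_subspaceIndicator hx hη, annihilator_eq_image_riesz_orthogonal,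
    Submodule.orthogonal_orthogonal_eq_closure, hS.submodule_topologicalClosure_eq]

lemma biInter_epsSubdiff_add_epsSubdiff_subspaceIndicator (hS : IsClosed (S : Set H))
    (hT : IsClosed (T : Set H)) (hxS : x ∈ Sᗮ) (hxT : x ∈ Tᗮ) :
    ⋂ η ∈ Set.Ioi (0 : ℝ), epsSubdiff (subspaceIndicator Sᗮ) η x +
      epsSubdiff (subspaceIndicator Tᗮ) η x = riesz '' ((S : Set H) + (T : Set H)) := by
  rw [Set.iInter₂_congr fun η hη => by
      rw [epsSubdiff_subspaceIndicator_orthogonal hS hxS (le_of_lt hη),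
        epsSubdiff_subspaceIndicator_orthogonal hT hxT (le_of_lt hη)],
    Set.biInter_const Set.nonempty_Ioi, Set.image_add]

lemma subdiff_subspaceIndicator_add_subspaceIndicator (hxS : x ∈ Sᗮ) (hxT : x ∈ Tᗮ) :
    subdiff (fun y => subspaceIndicator Sᗮ y + subspaceIndicator Tᗮ y) x =
      riesz '' closure ((S : Set H) + (T : Set H)) := by
  rw [subdiff, subspaceIndicator_add_subspaceIndicator,
    epsSubdiff_subspaceIndicator (Submodule.mem_inf.2 ⟨hxS, hxT⟩) le_rfl,
    annihilator_eq_image_riesz_orthogonal, Submodule.inf_orthogonal,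
    Submodule.orthogonal_orthogonal_eq_closure, Submodule.topologicalClosure_coe, Submodule.coe_sup]

end Riesz

section RotatedPairs

variable {H : Type*} [NormedAddCommGroup H] [InnerProductSpace ℝ H]

def rotVec (e : ℕ → H) (θ : ℕ → ℝ) (n : ℕ) : H :=
  Real.cos (θ n) • e (2 * n) + Real.sin (θ n) • e (2 * n + 1)

def rotVecPerp (e : ℕ → H) (θ : ℕ → ℝ) (n : ℕ) : H :=
  (-Real.sin (θ n)) • e (2 * n) + Real.cos (θ n) • e (2 * n + 1)

variable {e : ℕ → H} (θ : ℕ → ℝ) (he : Orthonormal ℝ e)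
include he

lemma Orthonormal.inner_even_even (m n : ℕ) :
    inner ℝ (e (2 * m)) (e (2 * n)) = if m = n then 1 else 0 := by
  rw [orthonormal_iff_ite.mp he]
  simp

lemma Orthonormal.inner_odd_odd (m n : ℕ) :
    inner ℝ (e (2 * m + 1)) (e (2 * n + 1)) = if m = n then 1 else 0 := by
  rw [orthonormal_iff_ite.mp he]
  simp

lemma Orthonormal.inner_even_odd (m n : ℕ) : inner ℝ (e (2 * m)) (e (2 * n + 1)) = 0 :=
  he.inner_eq_zero (by omega)

lemma Orthonormal.inner_odd_even (m n : ℕ) : inner ℝ (e (2 * m + 1)) (e (2 * n)) = 0 :=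
  he.inner_eq_zero (by omega)

lemma orthonormal_rotVec : Orthonormal ℝ (rotVec e θ) := by
  rw [orthonormal_iff_ite]
  intro i j
  simp only [rotVec, inner_add_left, inner_add_right, real_inner_smul_left, real_inner_smul_right,
    he.inner_even_even, he.inner_odd_odd, he.inner_even_odd, he.inner_odd_even]
  split_ifs with hij
  · subst hij
    linear_combination Real.cos_sq_add_sin_sq (θ i)
  · ring

lemma inner_rotVec_rotVecPerp (m n : ℕ) : inner ℝ (rotVec e θ m) (rotVecPerp e θ n) = 0 := by
  simp only [rotVec, rotVecPerp, inner_add_left, inner_add_right, real_inner_smul_left,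
    real_inner_smul_right, he.inner_even_even, he.inner_odd_odd, he.inner_even_odd,
    he.inner_odd_even]
  split_ifs with hmn
  · subst hmn
    ring
  · ring

end RotatedPairs

section NotClosed

variable {H : Type*} [NormedAddCommGroup H] [InnerProductSpace ℝ H]

lemma mem_orthogonal_closure_span {S : Set H} {z : H} (h : ∀ s ∈ S, inner ℝ s z = 0) :
    z ∈ (Submodule.span ℝ S).topologicalClosureᗮ := by
  rw [Submodule.orthogonal_closure]
  have : Submodule.span ℝ S ⟂ Submodule.span ℝ {z} :=
    Submodule.isOrtho_span.2 fun s hs _ hz => (Set.mem_singleton_iff.1 hz) ▸ h s hs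
  exact this.symm (Submodule.mem_span_singleton_self z)

def evenSpan (e : ℕ → H) : Submodule ℝ H :=
  (Submodule.span ℝ (Set.range fun n => e (2 * n))).topologicalClosure

def rotSpan (e : ℕ → H) (θ : ℕ → ℝ) : Submodule ℝ H :=
  (Submodule.span ℝ (Set.range (rotVec e θ))).topologicalClosure

variable {e : ℕ → H} {θ : ℕ → ℝ}

lemma odd_eq_sin_smul_rotVec_add_cos_smul_rotVecPerp (n : ℕ) :
    e (2 * n + 1) = Real.sin (θ n) • rotVec e θ n + Real.cos (θ n) • rotVecPerp e θ n := by
  simp only [rotVec, rotVecPerp]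
  linear_combination (norm := module) (-(Real.sin_sq_add_cos_sq (θ n))) • e (2 * n + 1)

variable (he : Orthonormal ℝ e)
include he

lemma rotVecPerp_mem_orthogonal_rotSpan (n : ℕ) : rotVecPerp e θ n ∈ (rotSpan e θ)ᗮ :=
  mem_orthogonal_closure_span <| by
    rintro _ ⟨m, rfl⟩
    exact inner_rotVec_rotVecPerp θ he m n

lemma odd_mem_orthogonal_evenSpan (n : ℕ) : e (2 * n + 1) ∈ (evenSpan e)ᗮ :=
  mem_orthogonal_closure_span <| by
    rintro _ ⟨m, rfl⟩
    exact he.inner_even_odd m n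

variable [CompleteSpace H] (hsum : Summable fun n => Real.sin (θ n) ^ 2)
include hsum

lemma summable_sin_smul_odd : Summable fun n => Real.sin (θ n) • e (2 * n + 1) := by
  have hodd : Orthonormal ℝ fun n => e (2 * n + 1) := he.comp _ fun a b h => by omega
  have := hodd.orthogonalFamily.summable_iff_norm_sq_summable fun n => Real.sin (θ n)
  simp only [LinearIsometry.toSpanSingleton_apply, Real.norm_eq_abs, sq_abs] at this
  exact this.2 hsum

lemma inner_odd_tsum_sin_smul_odd (n : ℕ) :
    inner ℝ (e (2 * n + 1)) (∑' k, Real.sin (θ k) • e (2 * k + 1)) = Real.sin (θ n) := by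
  have hterm : (fun k => inner ℝ (e (2 * n + 1)) (Real.sin (θ k) • e (2 * k + 1))) =
      fun k => if k = n then Real.sin (θ n) else 0 := by
    funext k
    rw [real_inner_smul_right, he.inner_odd_odd]
    by_cases h : k = n <;> simp [h, Ne.symm]
  have := (summable_sin_smul_odd he hsum).hasSum.mapL (innerSL ℝ (e (2 * n + 1)))
  exact this.unique (hterm ▸ hasSum_ite_eq n (Real.sin (θ n)))

lemma tsum_sin_smul_odd_mem_closure :
    ∑' n, Real.sin (θ n) • e (2 * n + 1) ∈
      closure ((evenSpan e : Set H) + (rotSpan e θ : Set H)) := by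
  refine mem_closure_of_tendsto (summable_sin_smul_odd he hsum).hasSum.tendsto_sum_nat
    (Filter.Eventually.of_forall fun N => ?_)
  refine ⟨∑ n ∈ Finset.range N, (-Real.cos (θ n)) • e (2 * n), ?_,
    ∑ n ∈ Finset.range N, rotVec e θ n, ?_, ?_⟩
  · exact Submodule.sum_mem _ fun n _ => Submodule.smul_mem _ _
      (Submodule.le_topologicalClosure _ (Submodule.subset_span ⟨n, rfl⟩))
  · exact Submodule.sum_mem _ fun n _ =>
      Submodule.le_topologicalClosure _ (Submodule.subset_span ⟨n, rfl⟩)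
  · simp only [← Finset.sum_add_distrib, rotVec, neg_smul, neg_add_cancel_left]

lemma tsum_sin_smul_odd_notMem_add (hθ : ∀ n, Real.sin (θ n) ≠ 0) :
    ∑' n, Real.sin (θ n) • e (2 * n + 1) ∉
      (evenSpan e : Set H) + (rotSpan e θ : Set H) := by
  rintro ⟨c, hc, d, hd, hcd⟩
  have hcoeff : ∀ n, inner ℝ (rotVec e θ n) d = 1 := by
    intro n
    have h := inner_odd_tsum_sin_smul_odd he hsum n
    rw [← hcd, inner_add_right,
      Submodule.inner_left_of_mem_orthogonal hc (odd_mem_orthogonal_evenSpan he n), zero_add,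
      odd_eq_sin_smul_rotVec_add_cos_smul_rotVecPerp (e := e) (θ := θ), inner_add_left,
      real_inner_smul_left, real_inner_smul_left,
      Submodule.inner_left_of_mem_orthogonal hd (rotVecPerp_mem_orthogonal_rotSpan he n),
      mul_zero, add_zero] at h
    exact mul_left_cancel₀ (hθ n) (h.trans (mul_one _).symm)
  have hbessel := (orthonormal_rotVec θ he).inner_products_summable d
  simp only [hcoeff, norm_one, one_pow] at hbessel
  exact one_ne_zero (tendsto_nhds_unique tendsto_const_nhds hbessel.tendsto_atTop_zero)

theorem not_isClosed_evenSpan_add_rotSpan (hθ : ∀ n, Real.sin (θ n) ≠ 0) :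
    ¬ IsClosed ((evenSpan e : Set H) + (rotSpan e θ : Set H)) := fun h =>
  tsum_sin_smul_odd_notMem_add he hsum hθ <|
    h.closure_subset (tsum_sin_smul_odd_mem_closure he hsum)

end NotClosed

open scoped Classical in
theorem stmt15_general {H : Type*} [NormedAddCommGroup H] [InnerProductSpace ℝ H] [CompleteSpace H]
    (e : ℕ → H) (he : Orthonormal ℝ e)
    (θ : ℕ → ℝ) (hθ : ∀ n, θ n ∈ Set.Ioc 0 (Real.pi / 2))
    (hsum : Summable fun n => Real.sin (θ n) ^ 2)
    (C D : Submodule ℝ H)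
    (hC : C = (Submodule.span ℝ (Set.range fun n => e (2 * n))).topologicalClosure)
    (hD : D = (Submodule.span ℝ (Set.range fun n =>
      Real.cos (θ n) • e (2 * n) + Real.sin (θ n) • e (2 * n + 1))).topologicalClosure)
    (f g : H → EReal)
    (hf : f = fun x => if x ∈ Cᗮ then (0 : EReal) else ⊤)
    (hg : g = fun x => if x ∈ Dᗮ then (0 : EReal) else ⊤) :
    (∀ x ∈ edom f ∩ edom g,
      (⋂ η ∈ Set.Ioi (0 : ℝ), epsSubdiff f η x + epsSubdiff g η x) =
        {p : WeakDual ℝ H | ∃ v ∈ (C : Set H) + (D : Set H), ∀ y, p y = (inner ℝ v y : ℝ)} ∧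
      subdiff (fun y => f y + g y) x ≠
        ⋂ η ∈ Set.Ioi (0 : ℝ), epsSubdiff f η x + epsSubdiff g η x) ∧
    ¬ IsClosed ((C : Set H) + (D : Set H)) := by
  obtain rfl : f = subspaceIndicator Cᗮ := hf
  obtain rfl : g = subspaceIndicator Dᗮ := hg
  have hCc : IsClosed (C : Set H) := hC ▸ Submodule.isClosed_topologicalClosure _
  have hDc : IsClosed (D : Set H) := hD ▸ Submodule.isClosed_topologicalClosure _
  have hsin (n : ℕ) : Real.sin (θ n) ≠ 0 := (Real.sin_pos_of_pos_of_lt_pi (hθ n).1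
    ((hθ n).2.trans_lt (by linarith [Real.pi_pos]))).ne'
  have hnc : ¬ IsClosed ((C : Set H) + (D : Set H)) :=
    hC ▸ hD ▸ not_isClosed_evenSpan_add_rotSpan he hsum hsin
  refine ⟨fun x ⟨hxC, hxD⟩ => ?_, hnc⟩
  rw [mem_edom_subspaceIndicator] at hxC hxD
  rw [biInter_epsSubdiff_add_epsSubdiff_subspaceIndicator hCc hDc hxC hxD,
    subdiff_subspaceIndicator_add_subspaceIndicator hxC hxD]
  exact ⟨image_riesz _, fun h =>
    hnc (closure_eq_iff_isClosed.1 (riesz.injective.image_injective h))⟩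

open scoped Classical in
theorem stmt15 {H : Type*} [NormedAddCommGroup H] [InnerProductSpace ℝ H] [CompleteSpace H]
    (hinf : ¬ FiniteDimensional ℝ H)
    (e : ℕ → H) (he : Orthonormal ℝ e)
    (θ : ℕ → ℝ) (hθ : ∀ n, θ n ∈ Set.Ioc 0 (Real.pi / 2))
    (hsum : Summable fun n => Real.sin (θ n) ^ 2)
    (C D : Submodule ℝ H)
    (hC : C = (Submodule.span ℝ (Set.range fun n => e (2 * n))).topologicalClosure)
    (hD : D = (Submodule.span ℝ (Set.range fun n =>
      Real.cos (θ n) • e (2 * n) + Real.sin (θ n) • e (2 * n + 1))).topologicalClosure)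
    (f g : H → EReal)
    (hf : f = fun x => if x ∈ Cᗮ then (0 : EReal) else ⊤)
    (hg : g = fun x => if x ∈ Dᗮ then (0 : EReal) else ⊤) :
    (∀ x ∈ edom f ∩ edom g,
      (⋂ η ∈ Set.Ioi (0 : ℝ), epsSubdiff f η x + epsSubdiff g η x) =
        {p : WeakDual ℝ H | ∃ v ∈ (C : Set H) + (D : Set H), ∀ y, p y = (inner ℝ v y : ℝ)} ∧
      subdiff (fun y => f y + g y) x ≠
        ⋂ η ∈ Set.Ioi (0 : ℝ), epsSubdiff f η x + epsSubdiff g η x) ∧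
    ¬ IsClosed ((C : Set H) + (D : Set H)) :=
  stmt15_general e he θ hθ hsum C D hC hD f g hf hg
end
end
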